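/- arXiv:1808.10127 — 3 statements merged into one kernel-verified Lean document; each statement's English description precedes it below -/
import Mathlib

section
/- Let r ≥ 1 and let n₁, …, n_r be integers with n_i ≥ 2 for each i, and set N = n₁ + ⋯ + n_r − r. Then there exists an r-edge-coloring of the complete bipartite graph K_{N,N} such that for every i with 1 ≤ i ≤ r, the subgraph formed by the edges of color i contains no cycle C_{2n_i}. Consequently, br(C_{2n₁}, C_{2n₂}, …, C_{2n_r}) ≥ n₁ + ⋯ + n_r − r + 1. -/
/-- The spanning subgraph of `G` consisting of the edges with color `i`,
given an edge coloring `χ` (on pairs of vertices) with `r` colors. -/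
def colorSubgraph {V : Type*} {r : ℕ} (G : SimpleGraph V) (χ : Sym2 V → Fin r) (i : Fin r) :
    SimpleGraph V where
  Adj u v := G.Adj u v ∧ χ s(u, v) = i
  symm := ⟨fun u v h => ⟨h.1.symm, by rw [Sym2.eq_swap]; exact h.2⟩⟩
  loopless := ⟨fun u h => G.irrefl h.1⟩

/-- `G` contains a cycle of length `m` (on `m` vertices) as a subgraph. -/
def HasCycleLength {V : Type*} (G : SimpleGraph V) (m : ℕ) : Prop :=
  ∃ (v : V) (w : G.Walk v v), w.IsCycle ∧ w.length = m

/-- The bipartite Ramsey number of cycles `C_{m 0}, …, C_{m (r-1)}`: the least `N` such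
that every `r`-edge-coloring of `K_{N,N}` contains, for some color `i`, a cycle of
length `m i` all of whose edges have color `i`. -/
noncomputable def brCycles (r : ℕ) (m : Fin r → ℕ) : ℕ :=
  sInf {N : ℕ | ∀ χ : Sym2 (Fin N ⊕ Fin N) → Fin r,
    ∃ i : Fin r,
      HasCycleLength (colorSubgraph (completeBipartiteGraph (Fin N) (Fin N)) χ i) (m i)}

/-!
Split the left side of `K_{N,N}` into classes `L_i` of size `n_i - 1` and give every edge the
colour of the class of its left endpoint. A cycle of length `2 n_i` alternates between the two
sides, so it passes through `n_i` distinct left vertices; in colour `i` all of them lie in `L_i`,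
which is too small.

For the bound on `br` the defining set must also be shown nonempty (`sInf ∅ = 0`): a double
pigeonhole gives a monochromatic `K_{t,t}` in every `r`-colouring of a large `K_{M,M}`, and
`K_{m,m}` contains `C_{2m}`.
-/

open SimpleGraph Finset

theorem cycleGraph_two_mul_isContained_completeBipartiteGraph (m : ℕ) :
    cycleGraph (2 * m) ⊑ completeBipartiteGraph (Fin m) (Fin m) := by
  let f (k : Fin (2 * m)) : Fin m ⊕ Fin m :=
    if k.val % 2 = 0 then .inl ⟨k / 2, by omega⟩ else .inr ⟨k / 2, by omega⟩
  refine ⟨⟨⟨f, fun {u v} huv => ?_⟩, fun u v huv => ?_⟩⟩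
  · -- `2 * m` is even, so the wrap-around edge also joins vertices of opposite parity.
    have hpar : (u.val % 2 = 0 ∧ v.val % 2 = 1) ∨ (u.val % 2 = 1 ∧ v.val % 2 = 0) := by
      rcases cycleGraph_adj'.1 huv with h | h <;> rw [Fin.val_sub] at h <;>
        have := congrArg (· % 2) h <;>
        simp only [Nat.mod_mod_of_dvd _ (dvd_mul_right 2 m)] at this <;> omega
    rcases hpar with ⟨hu, hv⟩ | ⟨hu, hv⟩ <;> simp [f, hu, hv]
  · change f u = f v at huv
    ext
    by_cases hu : u.val % 2 = 0 <;> by_cases hv : v.val % 2 = 0 <;>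
      simp [f, hu, hv, Fin.ext_iff] at huv <;> omega

theorem hasCycleLength_two_mul_of_completeBipartiteGraph_isContained {V : Type*}
    {G : SimpleGraph V} {m : ℕ} (hm : 2 ≤ m)
    (h : completeBipartiteGraph (Fin m) (Fin m) ⊑ G) : HasCycleLength G (2 * m) :=
  (cycleGraph_isContained_iff (by omega)).1
    ((cycleGraph_two_mul_isContained_completeBipartiteGraph m).trans h)

theorem le_card_of_cycleGraph_isContained {α β : Type*} {H : SimpleGraph (α ⊕ β)}
    (hH : H ≤ completeBipartiteGraph α β) {S : Finset α} (hS : ∀ a y, H.Adj (.inl a) y → a ∈ S)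
    {m : ℕ} (h : cycleGraph (2 * m) ⊑ H) : m ≤ #S := by
  obtain ⟨φ⟩ := h
  -- The edge `{2j, 2j+1}` of the cycle has a left endpoint in `S`; distinct `j` give distinct ones.
  have hleft : ∀ j : Fin m, ∃ a ∈ S, ∃ k : Fin (2 * m), k.val / 2 = j ∧ φ k = .inl a := by
    intro j
    have hadj : H.Adj (φ ⟨2 * j, by omega⟩) (φ ⟨2 * j + 1, by omega⟩) :=
      φ.toHom.map_adj (pathGraph_le_cycleGraph (pathGraph_adj.2 (Or.inl rfl)))
    generalize hu : φ ⟨2 * j, _⟩ = u at hadj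
    generalize hv : φ ⟨2 * j + 1, _⟩ = v at hadj
    rcases u with a | b
    · exact ⟨a, hS a v hadj, _, by simp, hu⟩
    rcases v with a | b'
    · exact ⟨a, hS a _ hadj.symm, _, by simp only; omega, hv⟩
    · simpa using hH hadj
  choose f hfS k hk hφ using hleft
  have hf : Set.InjOn f (univ : Finset (Fin m)) := fun j _ j' _ hjj' => by
    have := φ.injective ((hφ j).trans (hjj' ▸ hφ j').symm)
    exact Fin.ext ((hk j).symm.trans (this ▸ hk j'))
  simpa using card_le_card_of_injOn f (fun j _ => hfS j) hf

theorem colorSubgraph_le {V : Type*} {r : ℕ} (G : SimpleGraph V) (χ : Sym2 V → Fin r)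
    (i : Fin r) : colorSubgraph G χ i ≤ G :=
  fun _ _ h => h.1

section ColorByLeft

variable {α β : Type*} {r : ℕ} [NeZero r]

/-- Right vertices get the dummy colour `0`, so the edge `s(inl a, inr c)` gets colour `b a`. -/
def colorByLeft (b : α → Fin r) : Sym2 (α ⊕ β) → Fin r :=
  Sym2.lift ⟨fun u v => Sum.elim b 0 u + Sum.elim b 0 v, fun _ _ => add_comm _ _⟩

@[simp]
theorem colorByLeft_inl_inr (b : α → Fin r) (a : α) (c : β) :
    colorByLeft b s(.inl a, .inr c) = b a := by
  simp [colorByLeft]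

theorem colorSubgraph_colorByLeft_adj_inl {b : α → Fin r} {i : Fin r} {a : α} {y : α ⊕ β}
    (h : (colorSubgraph (completeBipartiteGraph α β) (colorByLeft b) i).Adj (.inl a) y) :
    b a = i := by
  obtain ⟨hadj, hcol⟩ := h
  rcases y with _ | c
  · simp at hadj
  · rwa [colorByLeft_inl_inr] at hcol

theorem not_hasCycleLength_colorByLeft [Fintype α] (b : α → Fin r) (i : Fin r) {m : ℕ}
    (hm : 2 ≤ m) (hb : #{a | b a = i} < m) :
    ¬ HasCycleLength (colorSubgraph (completeBipartiteGraph α β) (colorByLeft b) i) (2 * m) := by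
  intro h
  have := le_card_of_cycleGraph_isContained (colorSubgraph_le _ _ i)
    (fun a _ h => mem_filter.2 ⟨mem_univ a, colorSubgraph_colorByLeft_adj_inl h⟩)
    ((cycleGraph_isContained_iff (by omega)).2 h)
  omega

end ColorByLeft

theorem exists_card_fiber_le {ι : Type*} [Fintype ι] [DecidableEq ι] (c : ι → ℕ) {M : ℕ}
    (hM : M ≤ ∑ i, c i) : ∃ b : Fin M → ι, ∀ i, #{k | b k = i} ≤ c i := by
  obtain ⟨e⟩ : Nonempty (Fin M ↪ Σ i, Fin (c i)) :=
    Function.Embedding.nonempty_of_card_le (by simpa using hM)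
  refine ⟨fun k => (e k).1, fun i => ?_⟩
  calc #{k | (e k).1 = i} ≤ #{p : Σ i, Fin (c i) | p.1 = i} :=
        card_le_card_of_injOn e (fun k hk => by simpa using hk) e.injective.injOn
    _ = c i := by
        rw [← Fintype.card_subtype, Fintype.card_congr (Equiv.sigmaSubtype i), Fintype.card_fin]

theorem exists_monochromatic_rectangle {α β κ : Type*} [Fintype α] [Fintype β] [Fintype κ]
    (χ : α → β → κ) {t : ℕ} (hα : Fintype.card κ * t < Fintype.card α)
    (hβ : Fintype.card κ * 2 ^ Fintype.card α * t < Fintype.card β) :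
    ∃ c : κ, ∃ A : Finset α, ∃ B : Finset β, t < #A ∧ t < #B ∧ ∀ a ∈ A, ∀ b ∈ B, χ a b = c := by
  classical
  -- Every column has a colour class of size `> t`; pigeonhole the columns by (colour, class).
  have hcol : ∀ b, ∃ c, t < #{a | χ a b = c} := fun b =>
    Fintype.exists_lt_card_fiber_of_mul_lt_card _ hα
  choose c hc using hcol
  obtain ⟨⟨c₀, A⟩, hB⟩ := Fintype.exists_lt_card_fiber_of_mul_lt_card
    (fun b => (c b, ({a | χ a b = c b} : Finset α))) (by simpa [mul_assoc] using hβ)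
  obtain ⟨b₀, hb₀⟩ := card_pos.1 (t.zero_le.trans_lt hB)
  simp only [mem_filter, mem_univ, true_and, Prod.mk.injEq] at hb₀
  refine ⟨c₀, A, _, hb₀.2 ▸ hc b₀, hB, fun a ha b hb => ?_⟩
  simp only [mem_filter, mem_univ, true_and, Prod.mk.injEq] at hb
  rw [← hb.2] at ha
  simpa [hb.1] using ha

theorem exists_monochromatic_completeBipartiteGraph {r : ℕ} (s : Fin r → ℕ) :
    ∃ M, ∀ χ : Sym2 (Fin M ⊕ Fin M) → Fin r, ∃ i, completeBipartiteGraph (Fin (s i)) (Fin (s i)) ⊑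
      colorSubgraph (completeBipartiteGraph (Fin M) (Fin M)) χ i := by
  set t := univ.sup s
  set a := r * t + 1
  have ha : a ≤ r * 2 ^ a * t + a := Nat.le_add_left _ _
  refine ⟨r * 2 ^ a * t + a, fun χ => ?_⟩
  obtain ⟨c, A, B, hA, hB, hAB⟩ := exists_monochromatic_rectangle
    (fun (j : Fin a) v => χ s(.inl (Fin.castLE ha j), .inr v)) (t := t) (by simp [a]) (by simp [a])
  have hst : s c ≤ t := le_sup (mem_univ c)
  obtain ⟨A', hA'A, hA'⟩ := exists_subset_card_eq (hst.trans hA.le)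
  obtain ⟨B', hB'B, hB'⟩ := exists_subset_card_eq (hst.trans hB.le)
  refine ⟨c, completeBipartiteGraph_isContained_iff.2
    ⟨A'.map ((Fin.castLEEmb ha).trans .inl), B'.map .inr, by simpa, by simpa, ?_⟩⟩
  intro x hx y hy
  simp only [coe_map, Set.mem_image, mem_coe] at hx hy
  obtain ⟨j, hj, rfl⟩ := hx
  obtain ⟨v, hv, rfl⟩ := hy
  exact ⟨by simp, hAB j (hA'A hj) v (hB'B hv)⟩

theorem exists_coloring_not_hasCycleLength {r : ℕ} [NeZero r] (n : Fin r → ℕ)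
    (hn : ∀ i, 2 ≤ n i) {M : ℕ} (hM : M ≤ ∑ i, (n i - 1)) :
    ∃ χ : Sym2 (Fin M ⊕ Fin M) → Fin r, ∀ i,
      ¬ HasCycleLength (colorSubgraph (completeBipartiteGraph (Fin M) (Fin M)) χ i) (2 * n i) := by
  obtain ⟨b, hb⟩ := exists_card_fiber_le (fun i => n i - 1) hM
  exact ⟨colorByLeft b, fun i =>
    not_hasCycleLength_colorByLeft b i (hn i) ((hb i).trans_lt (by have := hn i; omega))⟩

/-- Let `r ≥ 1`, `n_i ≥ 2` for each `i`, and `N = n₁ + ⋯ + n_r − r`.  There is an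
`r`-edge-coloring of `K_{N,N}` with no cycle `C_{2n_i}` in color `i` for any `i`;
consequently `br(C_{2n₁}, …, C_{2n_r}) ≥ n₁ + ⋯ + n_r − r + 1`. -/
theorem br_cycles_lower_bound (r : ℕ) (hr : 1 ≤ r) (n : Fin r → ℕ) (hn : ∀ i, 2 ≤ n i)
    (N : ℕ) (hN : N = (∑ i, n i) - r) :
    (∃ χ : Sym2 (Fin N ⊕ Fin N) → Fin r, ∀ i : Fin r,
      ¬ HasCycleLength (colorSubgraph (completeBipartiteGraph (Fin N) (Fin N)) χ i)
          (2 * n i)) ∧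
    (∑ i, n i) - r + 1 ≤ brCycles r (fun i => 2 * n i) := by
  have : NeZero r := ⟨by omega⟩
  have hN_sum : N = ∑ i, (n i - 1) := by
    rw [hN, sum_tsub_distrib _ fun i _ => (hn i).trans' one_le_two]
    simp
  refine ⟨exists_coloring_not_hasCycleLength n hn hN_sum.le, ?_⟩
  obtain ⟨M₀, hM₀⟩ := exists_monochromatic_completeBipartiteGraph n
  rw [← hN]
  refine le_csInf ⟨M₀, fun χ => (hM₀ χ).imp fun i =>
    hasCycleLength_two_mul_of_completeBipartiteGraph_isContained (hn i)⟩ fun M hM => ?_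
  by_contra! hMN
  obtain ⟨χ, hχ⟩ := exists_coloring_not_hasCycleLength n hn (M := M) (by omega)
  obtain ⟨i, hi⟩ := hM χ
  exact hχ i hi
end

section
/- Let α be a real number and let G = (V, E) be a graph containing no matching that saturates at least α vertices. Then there exists a partition {S, T, U} of V such that: (1) the subgraph of G induced on T has maximum degree less than √|V| − 1; (2) G contains no edge joining a vertex of T and a vertex of U; and (3) |U| + 2|S| < α + √|V|. -/
/-!
Tutte–Berge: for a maximum matching `M` there is a set `S` with
`|V| + |S| ≤ |M| + odd(G - S)`. It follows from Tutte's theorem applied to `G` joined with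
`|V| - |M| - 2` universal vertices: that graph has no perfect matching, every Tutte violator of it
contains all the added vertices, and parity gains the last unit.

Given such an `S`, put the vertices of the components of `G - S` with fewer than `√|V|` vertices
into `T` and the others into `U`. Degrees inside `T` are then below `√|V| - 1` and no edge joins
`T` to `U`. Every component either has a vertex in `T` or at least `√|V|` vertices in `U`, so
`odd(G - S) ≤ |T| + |U| / √|V| ≤ |T| + √|V|`, and
`|U| + 2|S| = |V| + |S| - |T| ≤ |M| + √|V| < α + √|V|`.
-/

lemma Set.ncard_eq_ncard_preimage_inl_add_natCard {α β : Type*} [Finite α] [Finite β]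
    {u : Set (α ⊕ β)} (hu : Set.range Sum.inr ⊆ u) :
    u.ncard = (Sum.inl ⁻¹' u).ncard + Nat.card β := by
  have hsplit : u = Sum.inl '' (Sum.inl ⁻¹' u) ∪ Set.range Sum.inr := by
    ext (a | b) <;> simp [hu ⟨_, rfl⟩]
  conv_lhs => rw [hsplit]
  rw [Set.ncard_union_eq (by simp [Set.disjoint_left]),
    Set.ncard_image_of_injective _ Sum.inl_injective,
    Set.ncard_range_of_injective Sum.inr_injective]

namespace SimpleGraph

variable {V W ι : Type*} {G : SimpleGraph V}

lemma Iso.ncard_oddComponents_eq {G' : SimpleGraph W} (φ : G ≃g G') :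
    G.oddComponents.ncard = G'.oddComponents.ncard := by
  rw [← Nat.card_coe_set_eq, ← Nat.card_coe_set_eq]
  refine Nat.card_congr (φ.connectedComponentEquiv.subtypeEquiv fun C => ?_)
  simp only [Set.mem_ofPred_eq, ← Nat.card_coe_set_eq,
    Nat.card_congr (ConnectedComponent.isoEquivSupp φ C)]

lemma odd_ncard_oddComponents_induce_compl_iff [Finite V] (s : Set V) :
    Odd (G.induce sᶜ).oddComponents.ncard ↔ Odd (Nat.card V - s.ncard) := by
  rw [odd_ncard_oddComponents, Nat.card_coe_set_eq, Set.ncard_compl]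

def withUniversalVerts (G : SimpleGraph V) (ι : Type*) : SimpleGraph (V ⊕ ι) where
  Adj
    | .inl a, .inl b => G.Adj a b
    | .inr i, .inr j => i ≠ j
    | _, _ => True
  symm := ⟨by rintro (a | i) (b | j) h <;> simp_all [G.adj_comm, eq_comm]⟩
  loopless := ⟨by rintro (a | i) h <;> simp_all⟩

@[simp] lemma withUniversalVerts_adj_inl_inl {a b : V} :
    (G.withUniversalVerts ι).Adj (.inl a) (.inl b) ↔ G.Adj a b := Iff.rfl

lemma withUniversalVerts_adj_inr {x : V ⊕ ι} {i : ι} (h : x ≠ .inr i) :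
    (G.withUniversalVerts ι).Adj (.inr i) x := by
  rcases x with a | j
  · trivial
  · exact fun hij => h (hij ▸ rfl)

lemma exists_isMatching_of_isPerfectMatching_withUniversalVerts [Finite V] [Finite ι]
    {M' : (G.withUniversalVerts ι).Subgraph} (hM' : M'.IsPerfectMatching) :
    ∃ M : G.Subgraph, M.IsMatching ∧ Nat.card V ≤ M.verts.ncard + Nat.card ι := by
  let M : G.Subgraph :=
    { verts := {a | ∃ b, M'.Adj (.inl a) (.inl b)}
      Adj := fun a b => M'.Adj (.inl a) (.inl b)
      adj_sub := fun h => M'.adj_sub h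
      edge_vert := fun h => ⟨_, h⟩
      symm := ⟨fun _ _ h => h.symm⟩ }
  have hM : M.IsMatching := fun a ⟨b, hab⟩ =>
    ⟨b, hab, fun c hac => Sum.inl_injective (hM'.1.eq_of_adj_left hac hab)⟩
  refine ⟨M, hM, ?_⟩
  have hpartner (a : ↥M.vertsᶜ) : ∃ i, M'.Adj (.inl a) (.inr i) := by
    obtain ⟨b | i, hab, -⟩ := hM'.1 (hM'.2 (.inl a))
    exacts [absurd ⟨b, hab⟩ a.2, ⟨i, hab⟩]
  choose partner hpartner using hpartner
  have hcompl : M.vertsᶜ.ncard ≤ Nat.card ι := by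
    rw [← Nat.card_coe_set_eq]
    refine Nat.card_le_card_of_injective partner fun a b hab => Subtype.ext ?_
    exact Sum.inl_injective (hM'.1.eq_of_adj_right (hpartner a) (hab ▸ hpartner b))
  have := Set.ncard_add_ncard_compl M.verts
  omega

lemma not_isTutteViolator_withUniversalVerts_of_inr_notMem [Finite V] [Finite ι]
    (heven : Even (Nat.card V + Nat.card ι)) {u : Set (V ⊕ ι)} {i : ι} (hi : .inr i ∉ u) :
    ¬ (G.withUniversalVerts ι).IsTutteViolator u := by
  intro hu
  rw [IsTutteViolator] at hu
  set H := ((⊤ : (G.withUniversalVerts ι).Subgraph).deleteVerts u).coe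
  have hconn : H.Preconnected := by
    have hi' : Sum.inr i ∈ ((⊤ : (G.withUniversalVerts ι).Subgraph).deleteVerts u).verts := by
      simpa using hi
    have hreach (x : _) : H.Reachable ⟨_, hi'⟩ x := by
      by_cases hx : ⟨_, hi'⟩ = x
      · exact hx ▸ .refl _
      · have hx' : (x : V ⊕ ι) ∉ u := by simpa using x.2
        refine Adj.reachable ?_
        simpa [H, hi, hx'] using
          withUniversalVerts_adj_inr (G := G) fun h => hx (Subtype.ext h.symm)
    exact fun x y => (hreach x).symm.trans (hreach y)
  have hle : H.oddComponents.ncard ≤ 1 := by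
    have := hconn.subsingleton_connectedComponent
    exact Set.ncard_le_one_of_subsingleton _
  have hu0 : u = ∅ := (Set.ncard_eq_zero).mp (by omega)
  have hodd : Odd H.oddComponents.ncard := by
    rw [show H.oddComponents.ncard = 1 by omega]
    exact odd_one
  rw [odd_ncard_oddComponents] at hodd
  simp only [hu0, Subgraph.deleteVerts_empty, Subgraph.verts_top, Nat.card_coe_set_eq,
    Set.ncard_univ, Nat.card_sum] at hodd
  exact Nat.not_odd_iff_even.mpr heven hodd

lemma ncard_oddComponents_deleteVerts_withUniversalVerts {u : Set (V ⊕ ι)}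
    (hu : Set.range Sum.inr ⊆ u) :
    ((⊤ : (G.withUniversalVerts ι).Subgraph).deleteVerts u).coe.oddComponents.ncard =
      (G.induce (Sum.inl ⁻¹' u)ᶜ).oddComponents.ncard := by
  have hbij : Function.Bijective fun a : ↥(Sum.inl ⁻¹' u)ᶜ =>
      (⟨.inl a, Set.mem_univ _, a.2⟩ :
        ((⊤ : (G.withUniversalVerts ι).Subgraph).deleteVerts u).verts) := by
    refine ⟨fun a b h => Subtype.ext (Sum.inl_injective (congrArg Subtype.val h)), ?_⟩
    rintro ⟨a | i, hx⟩
    · exact ⟨⟨a, by simpa using hx⟩, rfl⟩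
    · simp [hu ⟨i, rfl⟩] at hx
  let φ : G.induce (Sum.inl ⁻¹' u)ᶜ ≃g
      ((⊤ : (G.withUniversalVerts ι).Subgraph).deleteVerts u).coe :=
    { toEquiv := Equiv.ofBijective _ hbij
      map_rel_iff' := by simp +contextual [Equiv.ofBijective_apply] }
  exact φ.ncard_oddComponents_eq.symm

theorem exists_ncard_add_lt_ncard_oddComponents [Finite V] (k : ℕ)
    (hpar : Even (Nat.card V + k))
    (h : ∀ M : G.Subgraph, M.IsMatching → M.verts.ncard + k < Nat.card V) :
    ∃ S : Set V, S.ncard + k < (G.induce Sᶜ).oddComponents.ncard := by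
  have hnopm (M' : (G.withUniversalVerts (Fin k)).Subgraph) : ¬ M'.IsPerfectMatching := by
    intro hM'
    obtain ⟨M, hM, hcard⟩ := exists_isMatching_of_isPerfectMatching_withUniversalVerts hM'
    have := h M hM
    rw [Nat.card_fin] at hcard
    omega
  obtain ⟨u, hu⟩ := exists_isTutteViolator hnopm (by simpa using hpar)
  have hinr : Set.range Sum.inr ⊆ u := by
    rintro _ ⟨i, rfl⟩
    by_contra hi
    exact not_isTutteViolator_withUniversalVerts_of_inr_notMem (by simpa using hpar) hi hu
  refine ⟨Sum.inl ⁻¹' u, ?_⟩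
  have hucard := Set.ncard_eq_ncard_preimage_inl_add_natCard hinr
  rw [IsTutteViolator, ncard_oddComponents_deleteVerts_withUniversalVerts hinr] at hu
  rw [Nat.card_fin] at hucard
  omega

theorem exists_isMatching_tutteBerge [Finite V] (G : SimpleGraph V) :
    ∃ (M : G.Subgraph) (S : Set V), M.IsMatching ∧
      Nat.card V + S.ncard ≤ M.verts.ncard + (G.induce Sᶜ).oddComponents.ncard := by
  obtain ⟨M, hM, hmax⟩ := Set.exists_max_image {M : G.Subgraph | M.IsMatching}
    (fun M => M.verts.ncard) (Set.toFinite _) ⟨⊥, fun _ hv => hv.elim⟩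
  obtain ⟨m, hm⟩ : Even M.verts.ncard := by
    classical
    cases nonempty_fintype V
    simpa [Set.ncard_eq_toFinset_card'] using hM.even_card
  have hpar (S : Set V) :
      (G.induce Sᶜ).oddComponents.ncard % 2 = 1 ↔ (Nat.card V - S.ncard) % 2 = 1 := by
    rw [← Nat.odd_iff, ← Nat.odd_iff]
    exact odd_ncard_oddComponents_induce_compl_iff S
  refine ⟨M, ?_⟩
  by_cases hdef : M.verts.ncard + 2 ≤ Nat.card V
  · obtain ⟨S, hS⟩ := exists_ncard_add_lt_ncard_oddComponents (G := G)
      (Nat.card V - M.verts.ncard - 2) ⟨Nat.card V - m - 1, by omega⟩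
      fun M' hM' => by have := hmax M' hM'; omega
    have hparS := hpar S
    have hSle := S.ncard_le_card
    exact ⟨S, hM, by omega⟩
  · have hpar0 := hpar ∅
    rw [Set.ncard_empty] at hpar0
    exact ⟨∅, hM, by rw [Set.ncard_empty]; omega⟩

lemma ncard_neighborSet_lt_ncard_supp [Finite W] (H : SimpleGraph W) (x : W) :
    (H.neighborSet x).ncard < (H.connectedComponentMk x).supp.ncard :=
  Set.ncard_lt_ncard ⟨fun _ hy => (ConnectedComponent.connectedComponentMk_eq_of_adj hy).symm,
    fun hsub => H.loopless.irrefl x (hsub ConnectedComponent.connectedComponentMk_mem)⟩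

lemma natCard_connectedComponent_le [Finite W] (H : SimpleGraph W) {r : ℝ} (hr : 0 < r) :
    (Nat.card H.ConnectedComponent : ℝ) ≤
      {x | ((H.connectedComponentMk x).supp.ncard : ℝ) < r}.ncard +
        {x | r ≤ (H.connectedComponentMk x).supp.ncard}.ncard / r := by
  classical
  cases nonempty_fintype W
  have hsum (P : H.ConnectedComponent → Prop) :
      ({x | P (H.connectedComponentMk x)}.ncard : ℝ) =
        ∑ C, if P C then (C.supp.ncard : ℝ) else 0 := by
    rw [Set.ncard_eq_toFinset_card', Finset.card_eq_sum_card_fiberwise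
      (f := H.connectedComponentMk) (t := Finset.univ) (by simp)]
    push_cast
    refine Finset.sum_congr rfl fun C _ => ?_
    split_ifs with hC
    · rw [Set.ncard_eq_toFinset_card']
      congr 2
      ext x
      simp only [Set.mem_toFinset, Set.mem_ofPred_eq, Finset.mem_filter,
        ConnectedComponent.mem_supp_iff]
      exact ⟨fun h => h.2, fun h => ⟨h ▸ hC, h⟩⟩
    · simp only [Nat.cast_eq_zero, Finset.card_eq_zero, Finset.filter_eq_empty_iff]
      rintro x hx rfl
      exact hC (by simpa using hx)
  rw [hsum (fun C => (C.supp.ncard : ℝ) < r), hsum (fun C => r ≤ (C.supp.ncard : ℝ)),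
    Finset.sum_div, ← Finset.sum_add_distrib, Nat.card_eq_fintype_card, ← Finset.card_univ,
    Finset.card_eq_sum_ones, Nat.cast_sum, Nat.cast_one]
  refine Finset.sum_le_sum fun C _ => ?_
  have hpos : (1 : ℝ) ≤ C.supp.ncard := by
    exact_mod_cast (Set.ncard_pos (Set.toFinite _)).mpr C.nonempty_supp
  split_ifs with hsmall hlarge hlarge
  · linarith
  · simpa using hpos
  · simpa [le_div_iff₀ hr] using hlarge
  · exact absurd (not_lt.mp hsmall) hlarge

theorem exists_partition_ncard_oddComponents_le [Finite V] (G : SimpleGraph V) (S : Set V)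
    {r : ℝ} (hr : 0 < r) :
    ∃ T U : Set V, S ∪ T ∪ U = Set.univ ∧ Disjoint S T ∧ Disjoint S U ∧ Disjoint T U ∧
      (∀ v ∈ T, ((G.neighborSet v ∩ T).ncard : ℝ) < r - 1) ∧
      (∀ u ∈ T, ∀ v ∈ U, ¬ G.Adj u v) ∧
      ((G.induce Sᶜ).oddComponents.ncard : ℝ) ≤ T.ncard + U.ncard / r := by
  set H := G.induce Sᶜ
  set size : ↥Sᶜ → ℝ := fun x => (H.connectedComponentMk x).supp.ncard
  have hval := Subtype.val_injective (p := (· ∈ Sᶜ))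
  refine ⟨Subtype.val '' {x | size x < r}, Subtype.val '' {x | r ≤ size x},
    ?_, ?_, ?_, ?_, ?_, ?_, ?_⟩
  · refine Set.eq_univ_of_forall fun v => ?_
    by_cases hv : v ∈ S
    · exact .inl (.inl hv)
    · rcases lt_or_ge (size ⟨v, hv⟩) r with h | h
      · exact .inl (.inr ⟨⟨v, hv⟩, h, rfl⟩)
      · exact .inr ⟨⟨v, hv⟩, h, rfl⟩
  · exact Set.disjoint_right.mpr fun _ ⟨x, _, hx⟩ => hx ▸ x.2
  · exact Set.disjoint_right.mpr fun _ ⟨x, _, hx⟩ => hx ▸ x.2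
  · refine Set.disjoint_left.mpr ?_
    rintro _ ⟨x, hx, rfl⟩ ⟨y, hy, hxy⟩
    cases hval hxy
    exact (not_lt.mpr (show r ≤ size x from hy)) hx
  · rintro _ ⟨x, hx, rfl⟩
    set T := Subtype.val '' {x | size x < r}
    have hsub : G.neighborSet x ∩ T ⊆ Subtype.val '' H.neighborSet x := by
      rintro _ ⟨hadj, y, -, rfl⟩
      exact ⟨y, hadj, rfl⟩
    have hlt := H.ncard_neighborSet_lt_ncard_supp x
    have hle := (Set.ncard_le_ncard hsub).trans (Set.ncard_image_of_injective _ hval).le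
    have hdeg : (G.neighborSet x ∩ T).ncard + 1 ≤ (H.connectedComponentMk x).supp.ncard := by
      omega
    have hdeg' : ((G.neighborSet x ∩ T).ncard : ℝ) + 1 ≤ size x := by
      simp only [size]
      exact_mod_cast hdeg
    linarith [show size x < r from hx]
  · rintro _ ⟨x, hx, rfl⟩ _ ⟨y, hy, rfl⟩ hadj
    have : size x = size y := by
      simp only [size, ConnectedComponent.connectedComponentMk_eq_of_adj (show H.Adj x y from hadj)]
    linarith [show size x < r from hx, show r ≤ size y from hy]
  · rw [Set.ncard_image_of_injective _ hval, Set.ncard_image_of_injective _ hval]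
    exact (Nat.cast_le.mpr (Set.ncard_le_card _)).trans (H.natCard_connectedComponent_le hr)

end SimpleGraph

/-- If a graph `G` on a finite vertex set `V` contains no matching saturating at least
`α` vertices, then there is a partition `{S, T, U}` of `V` such that every vertex of
`T` has fewer than `√|V| − 1` neighbors in `T`, there is no edge between `T` and `U`,
and `|U| + 2|S| < α + √|V|`. -/
theorem tutte_partition_of_no_large_matching {V : Type*} [Fintype V]
    (G : SimpleGraph V) (α : ℝ)
    (h : ¬ ∃ M : G.Subgraph, M.IsMatching ∧ α ≤ (M.verts.ncard : ℝ)) :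
    ∃ S T U : Set V, S ∪ T ∪ U = Set.univ ∧
      Disjoint S T ∧ Disjoint S U ∧ Disjoint T U ∧
      (∀ v ∈ T, ((G.neighborSet v ∩ T).ncard : ℝ) < Real.sqrt (Fintype.card V) - 1) ∧
      (∀ u ∈ T, ∀ v ∈ U, ¬ G.Adj u v) ∧
      (U.ncard : ℝ) + 2 * (S.ncard : ℝ) < α + Real.sqrt (Fintype.card V) := by
  obtain ⟨M, S, hM, hTB⟩ := G.exists_isMatching_tutteBerge
  have hMα : (M.verts.ncard : ℝ) < α := lt_of_not_ge fun hα => h ⟨M, hM, hα⟩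
  rcases isEmpty_or_nonempty V with hV | hV
  · refine ⟨∅, ∅, ∅, by simp [Set.univ_eq_empty_iff.mpr hV], ?_⟩
    simpa using (Nat.cast_nonneg _).trans_lt hMα
  set r := Real.sqrt (Fintype.card V)
  have hr : 0 < r := Real.sqrt_pos.mpr (by exact_mod_cast Fintype.card_pos)
  obtain ⟨T, U, hcover, hST, hSU, hTU, hdeg, hTUadj, hodd⟩ :=
    G.exists_partition_ncard_oddComponents_le S hr
  refine ⟨S, T, U, hcover, hST, hSU, hTU, hdeg, hTUadj, ?_⟩
  have hcard : S.ncard + T.ncard + U.ncard = Fintype.card V := by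
    rw [← Set.ncard_union_eq hST, ← Set.ncard_union_eq (Set.disjoint_union_left.mpr ⟨hSU, hTU⟩),
      hcover, Set.ncard_univ, Nat.card_eq_fintype_card]
  have hU : (U.ncard : ℝ) / r ≤ r := by
    rw [div_le_iff₀ hr, Real.mul_self_sqrt (Nat.cast_nonneg _)]
    exact_mod_cast hcard ▸ Nat.le_add_left _ _
  rw [Nat.card_eq_fintype_card] at hTB
  have hTB' := (Nat.cast_le (α := ℝ)).mpr hTB
  have hcard' := congrArg (Nat.cast (R := ℝ)) hcard
  push_cast at hTB' hcard'
  linarith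
end

section
/- For every β with 0 < β ≤ 1 there exists n₀ such that for every n > n₀ the following holds. Let G be a bipartite graph with bipartition V(G) = V₁ ∪ V₂ where |V₁| = |V₂| = n, and suppose the pair (V₁, V₂) is ε-regular in G with edge density at least β/4, for some ε with 0 < ε < β/100. Then for every integer l with 1 ≤ l ≤ n − 5εn/β, and every pair of vertices v′ ∈ V₁ and v″ ∈ V₂ with degrees d_G(v′) ≥ βn/5 and d_G(v″) ≥ βn/5, the graph G contains a path of length 2l + 1 connecting v′ and v″. -/
/-- The number of edges of `G` with first endpoint in `A` and second endpoint in `B`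
(for disjoint `A`, `B` this is the number of edges between `A` and `B`). -/
noncomputable def edgesBetween {V : Type*} (G : SimpleGraph V) (A B : Set V) : ℕ :=
  {p : V × V | p.1 ∈ A ∧ p.2 ∈ B ∧ G.Adj p.1 p.2}.ncard

/-- The edge density `d(A, B) = e(A, B)/(|A||B|)`. -/
noncomputable def edgeDen {V : Type*} (G : SimpleGraph V) (A B : Set V) : ℝ :=
  (edgesBetween G A B : ℝ) / ((A.ncard : ℝ) * (B.ncard : ℝ))

/-- The pair `(A, B)` is `ε`-regular: `|d(A, B) − d(A', B')| ≤ ε` whenever `A' ⊆ A`,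
`B' ⊆ B` with `|A'| > ε|A|` and `|B'| > ε|B|`. -/
def IsEpsRegularPair {V : Type*} (G : SimpleGraph V) (A B : Set V) (ε : ℝ) : Prop :=
  ∀ A' ⊆ A, ∀ B' ⊆ B, ε * (A.ncard : ℝ) < (A'.ncard : ℝ) →
    ε * (B.ncard : ℝ) < (B'.ncard : ℝ) →
    |edgeDen G A B - edgeDen G A' B'| ≤ ε

namespace RPLP
set_option linter.unusedSectionVars false
set_option maxHeartbeats 1000000

variable {V : Type*} [Fintype V] (G : SimpleGraph V)

lemma edgesBetween_empty_right (A : Set V) : edgesBetween G A ∅ = 0 := by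
  simp [edgesBetween]

lemma edgesBetween_insert_right (A B : Set V) {y : V} (hy : y ∉ B) :
    edgesBetween G A (insert y B) = edgesBetween G A B + (G.neighborSet y ∩ A).ncard := by
  classical
  have hset : {p : V × V | p.1 ∈ A ∧ p.2 ∈ insert y B ∧ G.Adj p.1 p.2}
      = {p : V × V | p.1 ∈ A ∧ p.2 ∈ B ∧ G.Adj p.1 p.2}
        ∪ ((fun a => (a, y)) '' (G.neighborSet y ∩ A)) := by
    ext ⟨a, b⟩
    simp only [Set.mem_setOf_eq, Set.mem_insert_iff, Set.mem_union, Set.mem_image,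
      Set.mem_inter_iff, SimpleGraph.mem_neighborSet, Prod.mk.injEq]
    constructor
    · rintro ⟨ha, hb | hb, hadj⟩
      · exact Or.inr ⟨a, ⟨by rw [hb] at hadj; exact hadj.symm, ha⟩, rfl, hb.symm⟩
      · exact Or.inl ⟨ha, hb, hadj⟩
    · rintro (⟨ha, hb, hadj⟩ | ⟨c, ⟨hadj, hc⟩, rfl, rfl⟩)
      · exact ⟨ha, Or.inr hb, hadj⟩
      · exact ⟨hc, Or.inl rfl, hadj.symm⟩
  have hdisj : Disjoint {p : V × V | p.1 ∈ A ∧ p.2 ∈ B ∧ G.Adj p.1 p.2}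
      ((fun a => (a, y)) '' (G.neighborSet y ∩ A)) := by
    rw [Set.disjoint_left]
    rintro ⟨a, b⟩ hmem hmem'
    obtain ⟨c, _, rfl, rfl⟩ := hmem'
    exact hy hmem.2.1
  rw [edgesBetween, hset, Set.ncard_union_eq hdisj (Set.toFinite _) (Set.toFinite _),
    Set.ncard_image_of_injective _ (fun a a' h => (Prod.mk.injEq _ _ _ _ ▸ h).1)]
  rfl

lemma edgesBetween_empty_left (B : Set V) : edgesBetween G ∅ B = 0 := by
  simp [edgesBetween]

lemma edgesBetween_insert_left (A B : Set V) {x : V} (hx : x ∉ A) :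
    edgesBetween G (insert x A) B = edgesBetween G A B + (G.neighborSet x ∩ B).ncard := by
  classical
  have hset : {p : V × V | p.1 ∈ insert x A ∧ p.2 ∈ B ∧ G.Adj p.1 p.2}
      = {p : V × V | p.1 ∈ A ∧ p.2 ∈ B ∧ G.Adj p.1 p.2}
        ∪ ((fun b => (x, b)) '' (G.neighborSet x ∩ B)) := by
    ext ⟨a, b⟩
    simp only [Set.mem_setOf_eq, Set.mem_insert_iff, Set.mem_union, Set.mem_image,
      Set.mem_inter_iff, SimpleGraph.mem_neighborSet, Prod.mk.injEq]
    constructor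
    · rintro ⟨ha | ha, hb, hadj⟩
      · exact Or.inr ⟨b, ⟨by rw [ha] at hadj; exact hadj, hb⟩, ha.symm, rfl⟩
      · exact Or.inl ⟨ha, hb, hadj⟩
    · rintro (⟨ha, hb, hadj⟩ | ⟨c, ⟨hadj, hc⟩, rfl, rfl⟩)
      · exact ⟨Or.inr ha, hb, hadj⟩
      · exact ⟨Or.inl rfl, hc, hadj⟩
  have hdisj : Disjoint {p : V × V | p.1 ∈ A ∧ p.2 ∈ B ∧ G.Adj p.1 p.2}
      ((fun b => (x, b)) '' (G.neighborSet x ∩ B)) := by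
    rw [Set.disjoint_left]
    rintro ⟨a, b⟩ hmem hmem'
    obtain ⟨c, _, rfl, rfl⟩ := hmem'
    exact hx hmem.1
  rw [edgesBetween, hset, Set.ncard_union_eq hdisj (Set.toFinite _) (Set.toFinite _),
    Set.ncard_image_of_injective _ (fun a a' h => (Prod.mk.injEq _ _ _ _ ▸ h).2)]
  rfl

lemma edgesBetween_le_right (A : Set V) {c : ℝ} :
    ∀ B : Set V, (∀ y ∈ B, ((G.neighborSet y ∩ A).ncard : ℝ) ≤ c) →
      (edgesBetween G A B : ℝ) ≤ c * B.ncard := by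
  intro B
  refine Set.Finite.induction_on B (Set.toFinite B) (by simp [edgesBetween_empty_right]) ?_
  intro y B' hy hB' ih h
  rw [edgesBetween_insert_right G A B' hy, Set.ncard_insert_of_notMem hy]
  push_cast
  have h1 := ih (fun z hz => h z (Set.mem_insert_of_mem _ hz))
  have h2 := h y (Set.mem_insert _ _)
  linarith

lemma edgesBetween_lt_right (A : Set V) {B : Set V} (hB : B.Nonempty) {c : ℝ}
    (h : ∀ y ∈ B, ((G.neighborSet y ∩ A).ncard : ℝ) < c) :
    (edgesBetween G A B : ℝ) < c * B.ncard := by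
  obtain ⟨y, hy⟩ := hB
  have hins : B = insert y (B \ {y}) := by simp [Set.insert_diff_singleton, hy]
  have hcard : (B.ncard : ℝ) = (B \ {y}).ncard + 1 := by
    rw [hins, Set.ncard_insert_of_notMem (by simp),
      Set.insert_diff_of_mem _ (Set.mem_singleton _), Set.diff_diff,
      Set.union_self]
    push_cast; ring
  have he : edgesBetween G A B
      = edgesBetween G A (B \ {y}) + (G.neighborSet y ∩ A).ncard := by
    conv_lhs => rw [hins]
    exact edgesBetween_insert_right G A _ (by simp)
  have h1 := edgesBetween_le_right G A (B \ {y})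
    (fun z hz => (h z hz.1).le)
  have h2 := h y hy
  rw [he, hcard]
  push_cast
  linarith

lemma edgesBetween_lt_left (B : Set V) {A : Set V} (hA : A.Nonempty) {c : ℝ}
    (h : ∀ x ∈ A, ((G.neighborSet x ∩ B).ncard : ℝ) < c) :
    (edgesBetween G A B : ℝ) < c * A.ncard := by
  have hle : ∀ A' : Set V, (∀ x ∈ A', ((G.neighborSet x ∩ B).ncard : ℝ) ≤ c) →
      (edgesBetween G A' B : ℝ) ≤ c * A'.ncard := by
    intro A'
    refine Set.Finite.induction_on A' (Set.toFinite A') (by simp [edgesBetween_empty_left]) ?_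
    intro x A'' hx hA'' ih h'
    rw [edgesBetween_insert_left G A'' B hx, Set.ncard_insert_of_notMem hx]
    push_cast
    have h1 := ih (fun z hz => h' z (Set.mem_insert_of_mem _ hz))
    have h2 := h' x (Set.mem_insert _ _)
    linarith
  obtain ⟨x, hx⟩ := hA
  have hins : A = insert x (A \ {x}) := by simp [Set.insert_diff_singleton, hx]
  have hcard : (A.ncard : ℝ) = (A \ {x}).ncard + 1 := by
    rw [hins, Set.ncard_insert_of_notMem (by simp),
      Set.insert_diff_of_mem _ (Set.mem_singleton _), Set.diff_diff,
      Set.union_self]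
    push_cast; ring
  have he : edgesBetween G A B
      = edgesBetween G (A \ {x}) B + (G.neighborSet x ∩ B).ncard := by
    conv_lhs => rw [hins]
    exact edgesBetween_insert_left G _ B (by simp)
  have h1 := hle (A \ {x}) (fun z hz => (h z hz.1).le)
  have h2 := h x hx
  rw [he, hcard]
  push_cast
  linarith

lemma edgesBetween_const_left {B : Set V} {t : ℕ} :
    ∀ A : Set V, (∀ x ∈ A, (G.neighborSet x ∩ B).ncard = t) →
      edgesBetween G A B = A.ncard * t := by
  intro A
  refine Set.Finite.induction_on A (Set.toFinite A) (by simp [edgesBetween_empty_left]) ?_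
  intro x A' hx hA' ih h
  rw [edgesBetween_insert_left G A' B hx, Set.ncard_insert_of_notMem hx,
    ih (fun z hz => h z (Set.mem_insert_of_mem _ hz)), h x (Set.mem_insert _ _)]
  ring


variable {n : ℕ} {G : SimpleGraph (Fin n ⊕ Fin n)} {β ε : ℝ}

/-- The left part. -/
abbrev VL (n : ℕ) : Set (Fin n ⊕ Fin n) := Set.range Sum.inl
/-- The right part. -/
abbrev VR (n : ℕ) : Set (Fin n ⊕ Fin n) := Set.range Sum.inr
/-- The density of the pair. -/
noncomputable def dG (G : SimpleGraph (Fin n ⊕ Fin n)) : ℝ := edgeDen G (VL n) (VR n)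

lemma ncard_VL : (VL n).ncard = n := by
  rw [VL, ← Set.image_univ, Set.ncard_image_of_injective _ Sum.inl_injective,
    Set.ncard_univ, Nat.card_eq_fintype_card, Fintype.card_fin]

lemma ncard_VR : (VR n).ncard = n := by
  rw [VR, ← Set.image_univ, Set.ncard_image_of_injective _ Sum.inr_injective,
    Set.ncard_univ, Nat.card_eq_fintype_card, Fintype.card_fin]

/-- Bundled context for the whole proof. -/
structure RegCtx (n : ℕ) (G : SimpleGraph (Fin n ⊕ Fin n)) (β ε : ℝ) : Prop where
  hbip : G ≤ completeBipartiteGraph (Fin n) (Fin n)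
  hβ0 : 0 < β
  hβ1 : β ≤ 1
  hε0 : 0 < ε
  hεβ : ε < β / 100
  hreg : IsEpsRegularPair G (VL n) (VR n) ε
  hden : β / 4 ≤ dG G
  hn : 1000000 < n

namespace RegCtx

variable (hc : RegCtx n G β ε)
include hc

lemma hn0 : (0:ℝ) < n := by
  have := hc.hn; positivity

lemma hd0 : 0 < dG G - ε := by
  have h1 := hc.hden; have h2 := hc.hεβ; have h3 := hc.hβ0; linarith

lemma adj_left {p : Fin n} {w : Fin n ⊕ Fin n} (h : G.Adj (Sum.inl p) w) : w ∈ VR n := by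
  have := hc.hbip h
  rcases w with q | q
  · simp [completeBipartiteGraph] at this
  · exact ⟨q, rfl⟩

lemma adj_right {q : Fin n} {w : Fin n ⊕ Fin n} (h : G.Adj (Sum.inr q) w) : w ∈ VL n := by
  have := hc.hbip h
  rcases w with p | p
  · exact ⟨p, rfl⟩
  · simp [completeBipartiteGraph] at this

lemma nbhd_sub_VR {a : Fin n ⊕ Fin n} (ha : a ∈ VL n) : G.neighborSet a ⊆ VR n := by
  obtain ⟨p, rfl⟩ := ha
  exact fun w hw => hc.adj_left hw

lemma nbhd_sub_VL {b : Fin n ⊕ Fin n} (hb : b ∈ VR n) : G.neighborSet b ⊆ VL n := by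
  obtain ⟨q, rfl⟩ := hb
  exact fun w hw => hc.adj_right hw

/-- All but at most `εn` vertices of `VR` have many neighbours in a given large `T ⊆ VL`. -/
lemma pick_right {S T : Set (Fin n ⊕ Fin n)} (hS : S ⊆ VR n) (hT : T ⊆ VL n)
    (hScard : ε * n < S.ncard) (hTcard : ε * n < T.ncard) :
    ∃ y ∈ S, (dG G - ε) * T.ncard ≤ ((G.neighborSet y ∩ T).ncard : ℝ) := by
  classical
  set Bad : Set (Fin n ⊕ Fin n) :=
    {y | y ∈ VR n ∧ ((G.neighborSet y ∩ T).ncard : ℝ) < (dG G - ε) * T.ncard} with hBad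
  have hεn : (0:ℝ) ≤ ε * n := mul_nonneg hc.hε0.le (Nat.cast_nonneg n)
  have hBadcard : (Bad.ncard : ℝ) ≤ ε * n := by
    by_contra hcon
    push_neg at hcon
    have hBadne : Bad.Nonempty := by
      rw [← Set.ncard_pos]
      exact_mod_cast lt_of_le_of_lt hεn hcon
    have hreg := hc.hreg T hT Bad (fun y hy => hy.1)
      (by rw [ncard_VL]; exact hTcard) (by rw [ncard_VR]; exact hcon)
    have hlt : (edgesBetween G T Bad : ℝ) < ((dG G - ε) * T.ncard) * Bad.ncard :=
      edgesBetween_lt_right G T hBadne (fun y hy => hy.2)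
    have hT0 : (0:ℝ) < T.ncard := lt_of_le_of_lt hεn hTcard
    have hB0 : (0:ℝ) < Bad.ncard := lt_of_le_of_lt hεn hcon
    have hdenlt : edgeDen G T Bad < dG G - ε := by
      rw [edgeDen, div_lt_iff₀ (by positivity)]
      calc (edgesBetween G T Bad : ℝ) < ((dG G - ε) * T.ncard) * Bad.ncard := hlt
        _ = (dG G - ε) * (T.ncard * Bad.ncard) := by ring
    have habs := (abs_le.1 hreg).2
    have hdd : dG G = edgeDen G (VL n) (VR n) := rfl
    rw [hdd] at hdenlt
    linarith [hdenlt, habs]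
  have hdiff : (S \ Bad).Nonempty := by
    rw [← Set.ncard_pos]
    have h2 : Bad.ncard < S.ncard := by
      exact_mod_cast lt_of_le_of_lt hBadcard hScard
    have h3 := Set.ncard_le_ncard_diff_add_ncard S Bad (Set.toFinite _)
    omega
  obtain ⟨y, hyS, hyBad⟩ := hdiff
  refine ⟨y, hyS, ?_⟩
  by_contra hcon
  push_neg at hcon
  exact hyBad ⟨hS hyS, hcon⟩

/-- All but at most `εn` vertices of `VL` have many neighbours in a given large `T ⊆ VR`. -/
lemma pick_left {S T : Set (Fin n ⊕ Fin n)} (hS : S ⊆ VL n) (hT : T ⊆ VR n)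
    (hScard : ε * n < S.ncard) (hTcard : ε * n < T.ncard) :
    ∃ x ∈ S, (dG G - ε) * T.ncard ≤ ((G.neighborSet x ∩ T).ncard : ℝ) := by
  classical
  set Bad : Set (Fin n ⊕ Fin n) :=
    {x | x ∈ VL n ∧ ((G.neighborSet x ∩ T).ncard : ℝ) < (dG G - ε) * T.ncard} with hBad
  have hεn : (0:ℝ) ≤ ε * n := mul_nonneg hc.hε0.le (Nat.cast_nonneg n)
  have hBadcard : (Bad.ncard : ℝ) ≤ ε * n := by
    by_contra hcon
    push_neg at hcon
    have hBadne : Bad.Nonempty := by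
      rw [← Set.ncard_pos]
      exact_mod_cast lt_of_le_of_lt hεn hcon
    have hreg := hc.hreg Bad (fun y hy => hy.1) T hT
      (by rw [ncard_VL]; exact hcon) (by rw [ncard_VR]; exact hTcard)
    have hlt : (edgesBetween G Bad T : ℝ) < ((dG G - ε) * T.ncard) * Bad.ncard :=
      edgesBetween_lt_left G T hBadne (fun y hy => hy.2)
    have hT0 : (0:ℝ) < T.ncard := lt_of_le_of_lt hεn hTcard
    have hB0 : (0:ℝ) < Bad.ncard := lt_of_le_of_lt hεn hcon
    have hdenlt : edgeDen G Bad T < dG G - ε := by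
      rw [edgeDen, div_lt_iff₀ (by positivity)]
      calc (edgesBetween G Bad T : ℝ) < ((dG G - ε) * T.ncard) * Bad.ncard := hlt
        _ = (dG G - ε) * (Bad.ncard * T.ncard) := by ring
    have habs := (abs_le.1 hreg).2
    have hdd : dG G = edgeDen G (VL n) (VR n) := rfl
    rw [hdd] at hdenlt
    linarith [hdenlt, habs]
  have hdiff : (S \ Bad).Nonempty := by
    rw [← Set.ncard_pos]
    have h2 : Bad.ncard < S.ncard := by
      exact_mod_cast lt_of_le_of_lt hBadcard hScard
    have h3 := Set.ncard_le_ncard_diff_add_ncard S Bad (Set.toFinite _)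
    omega
  obtain ⟨x, hxS, hxBad⟩ := hdiff
  refine ⟨x, hxS, ?_⟩
  by_contra hcon
  push_neg at hcon
  exact hxBad ⟨hS hxS, hcon⟩

/-- Any two large sets on opposite sides span an edge. -/
lemma exists_edge {A B : Set (Fin n ⊕ Fin n)} (hA : A ⊆ VL n) (hB : B ⊆ VR n)
    (hAcard : ε * n < A.ncard) (hBcard : ε * n < B.ncard) :
    ∃ a ∈ A, ∃ b ∈ B, G.Adj a b := by
  have hεn : (0:ℝ) ≤ ε * n := mul_nonneg hc.hε0.le (Nat.cast_nonneg n)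
  have hreg := hc.hreg A hA B hB (by rw [ncard_VL]; exact hAcard)
    (by rw [ncard_VR]; exact hBcard)
  have habs := (abs_le.1 hreg).2
  have hpos : 0 < edgeDen G A B := by
    have h1 := hc.hd0
    have hdd : dG G = edgeDen G (VL n) (VR n) := rfl
    rw [hdd] at h1
    linarith
  have hne : edgesBetween G A B ≠ 0 := by
    intro h0
    rw [edgeDen, h0] at hpos
    simp at hpos
  have hnon : {p : (Fin n ⊕ Fin n) × (Fin n ⊕ Fin n) |
      p.1 ∈ A ∧ p.2 ∈ B ∧ G.Adj p.1 p.2}.Nonempty := by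
    rw [← Set.ncard_pos]
    exact Nat.pos_of_ne_zero hne
  obtain ⟨⟨a, b⟩, ha, hb, hadj⟩ := hnon
  exact ⟨a, ha, b, hb, hadj⟩

end RegCtx

end RPLP

namespace RPLP
set_option linter.unusedSectionVars false
set_option maxHeartbeats 1000000

section Helpers
variable {α : Type*} [Finite α]

lemma cast_ncard_diff_singleton {s : Set α} {y : α} (hy : y ∈ s) :
    (((s \ {y}).ncard : ℝ)) = (s.ncard : ℝ) - 1 := by
  rw [Set.ncard_diff (Set.singleton_subset_iff.mpr hy) (Set.toFinite _), Set.ncard_singleton,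
    Nat.cast_sub ((Set.ncard_pos (Set.toFinite s)).mpr ⟨y, hy⟩)]
  simp

lemma ncard_sub_one_le_diff (s : Set α) (y : α) :
    (s.ncard : ℝ) - 1 ≤ ((s \ {y}).ncard : ℝ) := by
  by_cases hy : y ∈ s
  · rw [cast_ncard_diff_singleton hy]
  · rw [Set.diff_singleton_eq_self hy]; simp
end Helpers

section WalkHelpers
variable {V : Type*} {G : SimpleGraph V}
open SimpleGraph

lemma support_app2 {u a y x : V} (P : G.Walk u a) (h1 : G.Adj a y) (h2 : G.Adj y x) :
    (P.append (Walk.cons h1 (Walk.cons h2 Walk.nil))).support = P.support ++ [y, x] := by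
  rw [Walk.support_append]
  rfl

lemma isPath_app2 {u a y x : V} {P : G.Walk u a} (h1 : G.Adj a y) (h2 : G.Adj y x)
    (hP : P.IsPath) (hy : y ∉ P.support) (hx : x ∉ P.support) (hxy : y ≠ x) :
    (P.append (Walk.cons h1 (Walk.cons h2 Walk.nil))).IsPath := by
  rw [Walk.isPath_def, support_app2, List.nodup_append]
  refine ⟨hP.support_nodup, by simp [hxy], ?_⟩
  intro z hz w hmem hzw
  subst hzw
  simp only [List.mem_cons, List.not_mem_nil, or_false] at hmem
  rcases hmem with rfl | rfl
  · exact hy hz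
  · exact hx hz

lemma length_app2 {u a y x : V} (P : G.Walk u a) (h1 : G.Adj a y) (h2 : G.Adj y x) :
    (P.append (Walk.cons h1 (Walk.cons h2 Walk.nil))).length = P.length + 2 := by
  rw [Walk.length_append]
  rfl

lemma isPath_cons2 {b' x' b v'' : V} {Q : G.Walk b v''} (h1 : G.Adj b' x') (h2 : G.Adj x' b)
    (hQ : Q.IsPath) (hb' : b' ∉ Q.support) (hx' : x' ∉ Q.support) (hbx : b' ≠ x') :
    (Walk.cons h1 (Walk.cons h2 Q)).IsPath := by
  rw [Walk.cons_isPath_iff, Walk.cons_isPath_iff]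
  refine ⟨⟨hQ, hx'⟩, ?_⟩
  simp only [Walk.support_cons, List.mem_cons]
  rintro (rfl | hmem)
  · exact hbx rfl
  · exact hb' hmem

lemma support_app3 {v' a y x b v'' : V} (P : G.Walk v' a) (Q : G.Walk b v'')
    (h1 : G.Adj a y) (h2 : G.Adj y x) (h3 : G.Adj x b) :
    (P.append (Walk.cons h1 (Walk.cons h2 (Walk.cons h3 Q)))).support
      = P.support ++ y :: x :: Q.support := by
  rw [Walk.support_append]
  rfl

lemma isPath_app3 {v' a y x b v'' : V} {P : G.Walk v' a} {Q : G.Walk b v''}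
    (h1 : G.Adj a y) (h2 : G.Adj y x) (h3 : G.Adj x b)
    (hP : P.IsPath) (hQ : Q.IsPath) (hdisj : ∀ z ∈ P.support, z ∉ Q.support)
    (hyP : y ∉ P.support) (hyQ : y ∉ Q.support) (hxP : x ∉ P.support) (hxQ : x ∉ Q.support)
    (hxy : y ≠ x) :
    (P.append (Walk.cons h1 (Walk.cons h2 (Walk.cons h3 Q)))).IsPath := by
  rw [Walk.isPath_def, support_app3, List.nodup_append]
  refine ⟨hP.support_nodup, ?_, ?_⟩
  · simp only [List.nodup_cons]
    refine ⟨?_, ?_, hQ.support_nodup⟩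
    · simp only [List.mem_cons]
      rintro (rfl | hmem)
      · exact hxy rfl
      · exact hyQ hmem
    · exact hxQ
  · intro z hz w hmem hzw
    subst hzw
    simp only [List.mem_cons] at hmem
    rcases hmem with rfl | rfl | hmem
    · exact hyP hz
    · exact hxP hz
    · exact hdisj z hz hmem

lemma length_app3 {v' a y x b v'' : V} (P : G.Walk v' a) (Q : G.Walk b v'')
    (h1 : G.Adj a y) (h2 : G.Adj y x) (h3 : G.Adj x b) :
    (P.append (Walk.cons h1 (Walk.cons h2 (Walk.cons h3 Q)))).length
      = P.length + Q.length + 3 := by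
  rw [Walk.length_append]
  simp only [Walk.length_cons]
  ring

end WalkHelpers

variable {n : ℕ} {G : SimpleGraph (Fin n ⊕ Fin n)} {β ε : ℝ}

namespace RegCtx

variable (hc : RegCtx n G β ε)
include hc

lemma step_right {a : Fin n ⊕ Fin n} {U₁ U₂ : Set (Fin n ⊕ Fin n)}
    (hU₁ : U₁ ⊆ VL n) (hU₂ : U₂ ⊆ VR n)
    (hA : ε * n < ((G.neighborSet a ∩ U₂).ncard : ℝ))
    (hU₁c : ε * n < (U₁.ncard : ℝ))
    (hU₂c : ε * n < (U₂.ncard : ℝ) - 1)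
    (hstr1 : ε * n < (dG G - ε) * (U₁.ncard : ℝ)) :
    ∃ y ∈ U₂, ∃ x ∈ U₁, G.Adj a y ∧ G.Adj y x ∧
      (dG G - ε) * ((U₂.ncard : ℝ) - 1) ≤ ((G.neighborSet x ∩ (U₂ \ {y})).ncard : ℝ) := by
  obtain ⟨y, hyS, hydeg⟩ := hc.pick_right (S := G.neighborSet a ∩ U₂) (T := U₁)
    (Set.inter_subset_right.trans hU₂) hU₁ hA hU₁c
  have hyU₂ : y ∈ U₂ := hyS.2
  obtain ⟨x, hxS, hxdeg⟩ := hc.pick_left (S := G.neighborSet y ∩ U₁) (T := U₂ \ {y})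
    (Set.inter_subset_right.trans hU₁) (Set.diff_subset.trans hU₂)
    (lt_of_lt_of_le hstr1 hydeg)
    (by rw [cast_ncard_diff_singleton hyU₂]; exact hU₂c)
  refine ⟨y, hyU₂, x, hxS.2, hyS.1, hxS.1, ?_⟩
  rw [← cast_ncard_diff_singleton hyU₂]
  exact hxdeg

lemma step_left {b : Fin n ⊕ Fin n} {U₁ U₂ : Set (Fin n ⊕ Fin n)}
    (hU₁ : U₁ ⊆ VL n) (hU₂ : U₂ ⊆ VR n)
    (hB : ε * n < ((G.neighborSet b ∩ U₁).ncard : ℝ))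
    (hU₂c : ε * n < (U₂.ncard : ℝ))
    (hU₁c : ε * n < (U₁.ncard : ℝ) - 1)
    (hstr2 : ε * n < (dG G - ε) * (U₂.ncard : ℝ)) :
    ∃ x' ∈ U₁, ∃ b' ∈ U₂, G.Adj b x' ∧ G.Adj x' b' ∧
      (dG G - ε) * ((U₁.ncard : ℝ) - 1) ≤ ((G.neighborSet b' ∩ (U₁ \ {x'})).ncard : ℝ) := by
  obtain ⟨x', hxS, hxdeg⟩ := hc.pick_left (S := G.neighborSet b ∩ U₁) (T := U₂)
    (Set.inter_subset_right.trans hU₁) hU₂ hB hU₂c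
  have hxU₁ : x' ∈ U₁ := hxS.2
  obtain ⟨b', hbS, hbdeg⟩ := hc.pick_right (S := G.neighborSet x' ∩ U₂) (T := U₁ \ {x'})
    (Set.inter_subset_right.trans hU₂) (Set.diff_subset.trans hU₁)
    (lt_of_lt_of_le hstr2 hxdeg)
    (by rw [cast_ncard_diff_singleton hxU₁]; exact hU₁c)
  refine ⟨x', hxU₁, b', hbS.2, hxS.1, hbS.1, ?_⟩
  rw [← cast_ncard_diff_singleton hxU₁]
  exact hbdeg

end RegCtx
end RPLP

namespace RPLP
set_option linter.unusedSectionVars false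
set_option maxHeartbeats 1000000
open SimpleGraph

variable {n : ℕ} {G : SimpleGraph (Fin n ⊕ Fin n)} {β ε : ℝ}

lemma disjoint_VL_VR {z : Fin n ⊕ Fin n} (h1 : z ∈ VL n) (h2 : z ∈ VR n) : False := by
  obtain ⟨p, rfl⟩ := h1
  obtain ⟨q, hq⟩ := h2
  simp at hq

/-- Unused left vertices. -/
def unusedL {u a b w : Fin n ⊕ Fin n} (P : G.Walk u a) (Q : G.Walk b w) :
    Set (Fin n ⊕ Fin n) := VL n \ {z | z ∈ P.support ∨ z ∈ Q.support}

/-- Unused right vertices. -/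
def unusedR {u a b w : Fin n ⊕ Fin n} (P : G.Walk u a) (Q : G.Walk b w) :
    Set (Fin n ⊕ Fin n) := VR n \ {z | z ∈ P.support ∨ z ∈ Q.support}

lemma unusedL_sub {u a b w : Fin n ⊕ Fin n} (P : G.Walk u a) (Q : G.Walk b w) :
    unusedL P Q ⊆ VL n := Set.diff_subset

lemma unusedR_sub {u a b w : Fin n ⊕ Fin n} (P : G.Walk u a) (Q : G.Walk b w) :
    unusedR P Q ⊆ VR n := Set.diff_subset

lemma unusedL_app2 {v' a y x b v'' : Fin n ⊕ Fin n} (P : G.Walk v' a) (Q : G.Walk b v'')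
    (h1 : G.Adj a y) (h2 : G.Adj y x) (hy : y ∈ VR n) :
    unusedL (P.append (Walk.cons h1 (Walk.cons h2 Walk.nil))) Q = unusedL P Q \ {x} := by
  ext z
  simp only [unusedL, Set.mem_diff, Set.mem_setOf_eq, support_app2, List.mem_append,
    List.mem_cons, List.not_mem_nil, or_false, Set.mem_singleton_iff]
  constructor
  · rintro ⟨h, hn⟩
    exact ⟨⟨h, fun hor => hn (by tauto)⟩, fun hzx => hn (by tauto)⟩
  · rintro ⟨⟨h, hn⟩, hzx⟩
    refine ⟨h, ?_⟩
    rintro ((hP | (rfl | rfl)) | hQ)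
    · exact hn (Or.inl hP)
    · exact disjoint_VL_VR h hy
    · exact hzx rfl
    · exact hn (Or.inr hQ)

lemma unusedR_app2 {v' a y x b v'' : Fin n ⊕ Fin n} (P : G.Walk v' a) (Q : G.Walk b v'')
    (h1 : G.Adj a y) (h2 : G.Adj y x) (hx : x ∈ VL n) :
    unusedR (P.append (Walk.cons h1 (Walk.cons h2 Walk.nil))) Q = unusedR P Q \ {y} := by
  ext z
  simp only [unusedR, Set.mem_diff, Set.mem_setOf_eq, support_app2, List.mem_append,
    List.mem_cons, List.not_mem_nil, or_false, Set.mem_singleton_iff]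
  constructor
  · rintro ⟨h, hn⟩
    exact ⟨⟨h, fun hor => hn (by tauto)⟩, fun hzy => hn (by tauto)⟩
  · rintro ⟨⟨h, hn⟩, hzy⟩
    refine ⟨h, ?_⟩
    rintro ((hP | (rfl | rfl)) | hQ)
    · exact hn (Or.inl hP)
    · exact hzy rfl
    · exact disjoint_VL_VR hx h
    · exact hn (Or.inr hQ)

lemma unusedL_cons2 {v' a b' x' b v'' : Fin n ⊕ Fin n} (P : G.Walk v' a) (Q : G.Walk b v'')
    (h1 : G.Adj b' x') (h2 : G.Adj x' b) (hb' : b' ∈ VR n) :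
    unusedL P (Walk.cons h1 (Walk.cons h2 Q)) = unusedL P Q \ {x'} := by
  ext z
  simp only [unusedL, Set.mem_diff, Set.mem_setOf_eq, Walk.support_cons,
    List.mem_cons, Set.mem_singleton_iff]
  constructor
  · rintro ⟨h, hn⟩
    exact ⟨⟨h, fun hor => hn (by tauto)⟩, fun hzx => hn (by tauto)⟩
  · rintro ⟨⟨h, hn⟩, hzx⟩
    refine ⟨h, ?_⟩
    rintro (hP | (rfl | (rfl | hQ)))
    · exact hn (Or.inl hP)
    · exact disjoint_VL_VR h hb'
    · exact hzx rfl
    · exact hn (Or.inr hQ)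

lemma unusedR_cons2 {v' a b' x' b v'' : Fin n ⊕ Fin n} (P : G.Walk v' a) (Q : G.Walk b v'')
    (h1 : G.Adj b' x') (h2 : G.Adj x' b) (hx' : x' ∈ VL n) :
    unusedR P (Walk.cons h1 (Walk.cons h2 Q)) = unusedR P Q \ {b'} := by
  ext z
  simp only [unusedR, Set.mem_diff, Set.mem_setOf_eq, Walk.support_cons,
    List.mem_cons, Set.mem_singleton_iff]
  constructor
  · rintro ⟨h, hn⟩
    exact ⟨⟨h, fun hor => hn (by tauto)⟩, fun hzy => hn (by tauto)⟩
  · rintro ⟨⟨h, hn⟩, hzy⟩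
    refine ⟨h, ?_⟩
    rintro (hP | (rfl | (rfl | hQ)))
    · exact hn (Or.inl hP)
    · exact hzy rfl
    · exact disjoint_VL_VR hx' h
    · exact hn (Or.inr hQ)

lemma deg_inter_diff (N U : Set (Fin n ⊕ Fin n)) (c : Fin n ⊕ Fin n) :
    ((N ∩ U).ncard : ℝ) - 1 ≤ ((N ∩ (U \ {c})).ncard : ℝ) := by
  have h : N ∩ (U \ {c}) = (N ∩ U) \ {c} := by
    ext z; simp only [Set.mem_inter_iff, Set.mem_diff, Set.mem_singleton_iff]; tauto
  rw [h]
  exact ncard_sub_one_le_diff _ _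

namespace RegCtx

variable (hc : RegCtx n G β ε)
include hc

lemma extendP_walk {v' v'' a b : Fin n ⊕ Fin n} {P : G.Walk v' a} {Q : G.Walk b v''}
    (hP : P.IsPath) (hQ : Q.IsPath) (hdisj : ∀ z ∈ P.support, z ∉ Q.support)
    (hA : ε * n < ((G.neighborSet a ∩ unusedR P Q).ncard : ℝ))
    (hc1 : ε * n < ((unusedL P Q).ncard : ℝ))
    (hc2 : ε * n < ((unusedR P Q).ncard : ℝ) - 1)
    (hs1 : ε * n < (dG G - ε) * ((unusedL P Q).ncard : ℝ)) :
    ∃ (y x : Fin n ⊕ Fin n) (P' : G.Walk v' x), P'.IsPath ∧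
      (∀ z ∈ P'.support, z ∉ Q.support) ∧ P'.length = P.length + 2 ∧
      y ∈ unusedR P Q ∧ x ∈ unusedL P Q ∧
      unusedL P' Q = unusedL P Q \ {x} ∧ unusedR P' Q = unusedR P Q \ {y} ∧
      (dG G - ε) * (((unusedR P Q).ncard : ℝ) - 1)
        ≤ ((G.neighborSet x ∩ unusedR P' Q).ncard : ℝ) := by
  obtain ⟨y, hyU, x, hxU, hay, hyx, hdeg⟩ :=
    hc.step_right (unusedL_sub P Q) (unusedR_sub P Q) hA hc1 hc2 hs1
  have hyVR : y ∈ VR n := unusedR_sub P Q hyU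
  have hxVL : x ∈ VL n := unusedL_sub P Q hxU
  have hyP : y ∉ P.support := fun h => hyU.2 (Or.inl h)
  have hyQ : y ∉ Q.support := fun h => hyU.2 (Or.inr h)
  have hxP : x ∉ P.support := fun h => hxU.2 (Or.inl h)
  have hxQ : x ∉ Q.support := fun h => hxU.2 (Or.inr h)
  have hxy : y ≠ x := fun h => disjoint_VL_VR (h ▸ hxVL) hyVR
  refine ⟨y, x, P.append (Walk.cons hay (Walk.cons hyx Walk.nil)),
    isPath_app2 hay hyx hP hyP hxP hxy, ?_, length_app2 P hay hyx, hyU, hxU,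
    unusedL_app2 P Q hay hyx hyVR, unusedR_app2 P Q hay hyx hxVL, ?_⟩
  · intro z hz
    rw [support_app2] at hz
    rcases List.mem_append.mp hz with hz | hz
    · exact hdisj z hz
    · simp only [List.mem_cons, List.not_mem_nil, or_false] at hz
      rcases hz with rfl | rfl
      · exact hyQ
      · exact hxQ
  · rw [unusedR_app2 P Q hay hyx hxVL]
    exact hdeg

lemma extendQ_walk {v' v'' a b : Fin n ⊕ Fin n} {P : G.Walk v' a} {Q : G.Walk b v''}
    (hP : P.IsPath) (hQ : Q.IsPath) (hdisj : ∀ z ∈ P.support, z ∉ Q.support)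
    (hB : ε * n < ((G.neighborSet b ∩ unusedL P Q).ncard : ℝ))
    (hc2 : ε * n < ((unusedR P Q).ncard : ℝ))
    (hc1 : ε * n < ((unusedL P Q).ncard : ℝ) - 1)
    (hs2 : ε * n < (dG G - ε) * ((unusedR P Q).ncard : ℝ)) :
    ∃ (x' b' : Fin n ⊕ Fin n) (Q' : G.Walk b' v''), Q'.IsPath ∧
      (∀ z ∈ P.support, z ∉ Q'.support) ∧ Q'.length = Q.length + 2 ∧
      x' ∈ unusedL P Q ∧ b' ∈ unusedR P Q ∧
      unusedL P Q' = unusedL P Q \ {x'} ∧ unusedR P Q' = unusedR P Q \ {b'} ∧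
      (dG G - ε) * (((unusedL P Q).ncard : ℝ) - 1)
        ≤ ((G.neighborSet b' ∩ unusedL P Q').ncard : ℝ) := by
  obtain ⟨x', hxU, b', hbU, hbx, hxb, hdeg⟩ :=
    hc.step_left (unusedL_sub P Q) (unusedR_sub P Q) hB hc2 hc1 hs2
  have hbVR : b' ∈ VR n := unusedR_sub P Q hbU
  have hxVL : x' ∈ VL n := unusedL_sub P Q hxU
  have hbP : b' ∉ P.support := fun h => hbU.2 (Or.inl h)
  have hbQ : b' ∉ Q.support := fun h => hbU.2 (Or.inr h)
  have hxP : x' ∉ P.support := fun h => hxU.2 (Or.inl h)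
  have hxQ : x' ∉ Q.support := fun h => hxU.2 (Or.inr h)
  have hbx' : b' ≠ x' := fun h => disjoint_VL_VR (h ▸ hxVL) hbVR
  have hadj1 : G.Adj b' x' := hxb.symm
  have hadj2 : G.Adj x' b := hbx.symm
  refine ⟨x', b', Walk.cons hadj1 (Walk.cons hadj2 Q),
    isPath_cons2 hadj1 hadj2 hQ hbQ hxQ hbx', ?_, by simp, hxU, hbU,
    unusedL_cons2 P Q hadj1 hadj2 hbVR, unusedR_cons2 P Q hadj1 hadj2 hxVL, ?_⟩
  · intro z hz
    simp only [Walk.support_cons, List.mem_cons]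
    rintro (rfl | (rfl | hmem))
    · exact hbP hz
    · exact hxP hz
    · exact hdisj z hz hmem
  · rw [unusedL_cons2 P Q hadj1 hadj2 hbVR]
    exact hdeg

/-- Connecting the two partial paths. -/
lemma connect_walk {v' v'' a b : Fin n ⊕ Fin n} {P : G.Walk v' a} {Q : G.Walk b v''}
    (hP : P.IsPath) (hQ : Q.IsPath) (hdisj : ∀ z ∈ P.support, z ∉ Q.support)
    (hA : ε * n < ((G.neighborSet a ∩ unusedR P Q).ncard : ℝ))
    (hB : ε * n < ((G.neighborSet b ∩ unusedL P Q).ncard : ℝ)) :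
    ∃ W : G.Walk v' v'', W.IsPath ∧ W.length = P.length + Q.length + 3 := by
  obtain ⟨x, hx, y, hy, hadj⟩ := hc.exists_edge (A := G.neighborSet b ∩ unusedL P Q)
    (B := G.neighborSet a ∩ unusedR P Q)
    (Set.inter_subset_right.trans (unusedL_sub P Q))
    (Set.inter_subset_right.trans (unusedR_sub P Q)) hB hA
  have hyU : y ∈ unusedR P Q := hy.2
  have hxU : x ∈ unusedL P Q := hx.2
  have h1 : G.Adj a y := hy.1
  have h2 : G.Adj y x := hadj.symm
  have h3 : G.Adj x b := hx.1.symm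
  have hyVR : y ∈ VR n := unusedR_sub P Q hyU
  have hxVL : x ∈ VL n := unusedL_sub P Q hxU
  refine ⟨P.append (Walk.cons h1 (Walk.cons h2 (Walk.cons h3 Q))),
    isPath_app3 h1 h2 h3 hP hQ hdisj (fun h => hyU.2 (Or.inl h)) (fun h => hyU.2 (Or.inr h))
      (fun h => hxU.2 (Or.inl h)) (fun h => hxU.2 (Or.inr h))
      (fun h => disjoint_VL_VR (h ▸ hxVL) hyVR),
    length_app3 P Q h1 h2 h3⟩

end RegCtx
end RPLP

namespace RPLP
set_option linter.unusedSectionVars false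
set_option maxHeartbeats 1000000
open SimpleGraph

variable {n : ℕ} {G : SimpleGraph (Fin n ⊕ Fin n)} {β ε : ℝ}

/-- The invariant for the double-path construction. -/
def Inv (G : SimpleGraph (Fin n ⊕ Fin n)) (ε : ℝ) (v' v'' : Fin n ⊕ Fin n) (k : ℕ) : Prop :=
  ∃ (a b : Fin n ⊕ Fin n) (P : G.Walk v' a) (Q : G.Walk b v''),
    P.IsPath ∧ Q.IsPath ∧ (∀ z ∈ P.support, z ∉ Q.support) ∧
    P.length = 2 * k ∧ Q.length = 2 * k ∧
    ((unusedL P Q).ncard : ℝ) = (n : ℝ) - (2 * k + 1) ∧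
    ((unusedR P Q).ncard : ℝ) = (n : ℝ) - (2 * k + 1) ∧
    (edgeDen G (VL n) (VR n) - ε) * ((n : ℝ) - 2 * k) - 1
      ≤ ((G.neighborSet a ∩ unusedR P Q).ncard : ℝ) ∧
    (edgeDen G (VL n) (VR n) - ε) * ((n : ℝ) - 2 * k - 1)
      ≤ ((G.neighborSet b ∩ unusedL P Q).ncard : ℝ)

lemma dG_eq : dG G = edgeDen G (VL n) (VR n) := rfl

namespace RegCtx

variable (hc : RegCtx n G β ε)
include hc

lemma double_extend {v' v'' a b : Fin n ⊕ Fin n} {P : G.Walk v' a} {Q : G.Walk b v''}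
    (hP : P.IsPath) (hQ : Q.IsPath) (hdisj : ∀ z ∈ P.support, z ∉ Q.support)
    {M DA DB : ℝ}
    (hU1 : ((unusedL P Q).ncard : ℝ) = M) (hU2 : ((unusedR P Q).ncard : ℝ) = M)
    (hdA : DA ≤ ((G.neighborSet a ∩ unusedR P Q).ncard : ℝ))
    (hdB : DB ≤ ((G.neighborSet b ∩ unusedL P Q).ncard : ℝ))
    (hDA : ε * n < DA) (hDB : ε * n < DB - 1) (hM : ε * n < M - 2)
    (hs : ε * n < (dG G - ε) * (M - 1)) :
    ∃ (a' b' : Fin n ⊕ Fin n) (P' : G.Walk v' a') (Q' : G.Walk b' v''),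
      P'.IsPath ∧ Q'.IsPath ∧ (∀ z ∈ P'.support, z ∉ Q'.support) ∧
      P'.length = P.length + 2 ∧ Q'.length = Q.length + 2 ∧
      ((unusedL P' Q').ncard : ℝ) = M - 2 ∧ ((unusedR P' Q').ncard : ℝ) = M - 2 ∧
      (dG G - ε) * (M - 1) - 1 ≤ ((G.neighborSet a' ∩ unusedR P' Q').ncard : ℝ) ∧
      (dG G - ε) * (M - 2) ≤ ((G.neighborSet b' ∩ unusedL P' Q').ncard : ℝ) := by
  have hd0 := hc.hd0
  have hmono : (dG G - ε) * (M - 1) ≤ (dG G - ε) * M :=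
    mul_le_mul_of_nonneg_left (by linarith) hd0.le
  obtain ⟨y, x, P', hP', hdisj', hlen', hyU, hxU, hL', hR', hdegx⟩ :=
    hc.extendP_walk hP hQ hdisj (lt_of_lt_of_le hDA hdA)
      (by rw [hU1]; linarith) (by rw [hU2]; linarith) (by rw [hU1]; linarith)
  have hcardL' : ((unusedL P' Q).ncard : ℝ) = M - 1 := by
    rw [hL', cast_ncard_diff_singleton hxU, hU1]
  have hcardR' : ((unusedR P' Q).ncard : ℝ) = M - 1 := by
    rw [hR', cast_ncard_diff_singleton hyU, hU2]
  have hB : ε * n < ((G.neighborSet b ∩ unusedL P' Q).ncard : ℝ) := by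
    have h1 := deg_inter_diff (G.neighborSet b) (unusedL P Q) x
    rw [← hL'] at h1
    linarith
  obtain ⟨x', b', Q', hQ', hdisj'', hlenQ', hx'U, hb'U, hL'', hR'', hdegb⟩ :=
    hc.extendQ_walk hP' hQ hdisj' hB
      (by rw [hcardR']; linarith) (by rw [hcardL']; linarith) (by rw [hcardR']; linarith)
  refine ⟨x, b', P', Q', hP', hQ', hdisj'', hlen', hlenQ', ?_, ?_, ?_, ?_⟩
  · rw [hL'', cast_ncard_diff_singleton hx'U, hcardL']; ring
  · rw [hR'', cast_ncard_diff_singleton hb'U, hcardR']; ring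
  · have h1 := deg_inter_diff (G.neighborSet x) (unusedR P' Q) b'
    rw [← hR''] at h1
    rw [hU2] at hdegx
    linarith
  · rw [hcardL'] at hdegb
    have : M - 1 - 1 = M - 2 := by ring
    rw [this] at hdegb
    exact hdegb

lemma base_facts {v' v'' : Fin n ⊕ Fin n} (hv' : v' ∈ VL n) (hv'' : v'' ∈ VR n)
    (hdeg' : β * n / 5 ≤ ((G.neighborSet v').ncard : ℝ))
    (hdeg'' : β * n / 5 ≤ ((G.neighborSet v'').ncard : ℝ)) :
    ((unusedL (Walk.nil : G.Walk v' v') (Walk.nil : G.Walk v'' v'')).ncard : ℝ) = (n : ℝ) - 1 ∧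
    ((unusedR (Walk.nil : G.Walk v' v') (Walk.nil : G.Walk v'' v'')).ncard : ℝ) = (n : ℝ) - 1 ∧
    β * n / 5 - 1 ≤ ((G.neighborSet v' ∩
      unusedR (Walk.nil : G.Walk v' v') (Walk.nil : G.Walk v'' v'')).ncard : ℝ) ∧
    β * n / 5 - 1 ≤ ((G.neighborSet v'' ∩
      unusedL (Walk.nil : G.Walk v' v') (Walk.nil : G.Walk v'' v'')).ncard : ℝ) := by
  have hsetL : unusedL (Walk.nil : G.Walk v' v') (Walk.nil : G.Walk v'' v'')
      = VL n \ {v'} := by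
    ext z
    simp only [unusedL, Set.mem_diff, Set.mem_setOf_eq, Walk.support_nil, List.mem_singleton,
      Set.mem_singleton_iff]
    constructor
    · rintro ⟨h, hn⟩; exact ⟨h, fun hz => hn (Or.inl hz)⟩
    · rintro ⟨h, hn⟩
      refine ⟨h, ?_⟩
      rintro (rfl | rfl)
      · exact hn rfl
      · exact disjoint_VL_VR h hv''
  have hsetR : unusedR (Walk.nil : G.Walk v' v') (Walk.nil : G.Walk v'' v'')
      = VR n \ {v''} := by
    ext z
    simp only [unusedR, Set.mem_diff, Set.mem_setOf_eq, Walk.support_nil, List.mem_singleton,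
      Set.mem_singleton_iff]
    constructor
    · rintro ⟨h, hn⟩; exact ⟨h, fun hz => hn (Or.inr hz)⟩
    · rintro ⟨h, hn⟩
      refine ⟨h, ?_⟩
      rintro (rfl | rfl)
      · exact disjoint_VL_VR hv' h
      · exact hn rfl
  have hNL : G.neighborSet v' ∩ (VR n \ {v''}) = G.neighborSet v' \ {v''} := by
    ext z
    simp only [Set.mem_inter_iff, Set.mem_diff, Set.mem_singleton_iff]
    constructor
    · rintro ⟨h1, _, h3⟩; exact ⟨h1, h3⟩
    · rintro ⟨h1, h2⟩; exact ⟨h1, hc.nbhd_sub_VR hv' h1, h2⟩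
  have hNR : G.neighborSet v'' ∩ (VL n \ {v'}) = G.neighborSet v'' \ {v'} := by
    ext z
    simp only [Set.mem_inter_iff, Set.mem_diff, Set.mem_singleton_iff]
    constructor
    · rintro ⟨h1, _, h3⟩; exact ⟨h1, h3⟩
    · rintro ⟨h1, h2⟩; exact ⟨h1, hc.nbhd_sub_VL hv'' h1, h2⟩
  have hv'VL : ((VL n \ {v'}).ncard : ℝ) = (n : ℝ) - 1 := by
    rw [cast_ncard_diff_singleton hv', ncard_VL]
  have hv''VR : ((VR n \ {v''}).ncard : ℝ) = (n : ℝ) - 1 := by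
    rw [cast_ncard_diff_singleton hv'', ncard_VR]
  refine ⟨by rw [hsetL]; exact hv'VL, by rw [hsetR]; exact hv''VR, ?_, ?_⟩
  · rw [hsetR, hNL]
    have := ncard_sub_one_le_diff (G.neighborSet v') v''
    linarith
  · rw [hsetL, hNR]
    have := ncard_sub_one_le_diff (G.neighborSet v'') v'
    linarith

end RegCtx
end RPLP

namespace RPLP
set_option linter.unusedSectionVars false
set_option linter.unusedVariables false
set_option maxHeartbeats 1000000
open SimpleGraph

variable {n : ℕ} {G : SimpleGraph (Fin n ⊕ Fin n)} {β ε : ℝ}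

namespace RegCtx

variable (hc : RegCtx n G β ε)
include hc

lemma numeric {l : ℕ} (hnl : 5 * ε * n / β ≤ (n : ℝ) - (l : ℝ)) :
    (6/5) * (ε * n) ≤ (dG G - ε) * ((n : ℝ) - (l : ℝ)) ∧
    5 * (ε * n) ≤ (n : ℝ) - (l : ℝ) ∧
    20 * (ε * n) ≤ β * n / 5 := by
  have hβ := hc.hβ0
  have hβ1 := hc.hβ1
  have hε := hc.hε0
  have hεβ := hc.hεβ
  have hn0 : (0:ℝ) ≤ n := Nat.cast_nonneg n
  have hεn0 : 0 ≤ ε * n := mul_nonneg hε.le hn0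
  have hd : (6/25) * β ≤ dG G - ε := by
    have h := hc.hden
    linarith
  have h5 : 5 * (ε * n) ≤ 5 * ε * n / β := by
    rw [le_div_iff₀ hβ]
    nlinarith
  have hge0 : (0:ℝ) ≤ 5 * ε * n / β := div_nonneg (by nlinarith) hβ.le
  refine ⟨?_, by linarith, ?_⟩
  · have heq : (6/25) * β * (5 * ε * n / β) = (6/5) * (ε * n) := by
      field_simp
      ring
    calc (6/5) * (ε * n) = (6/25) * β * (5 * ε * n / β) := heq.symm
      _ ≤ (dG G - ε) * ((n : ℝ) - l) :=
        mul_le_mul hd hnl hge0 (le_trans (by nlinarith) hd)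
  · have h100 : 100 * ε ≤ β := by linarith
    nlinarith

lemma inv_step {v' v'' : Fin n ⊕ Fin n} {l k : ℕ} (hbig : 10 < ε * n)
    (hnl : 5 * ε * n / β ≤ (n : ℝ) - (l : ℝ)) (hkl : 2 * k + 3 ≤ l)
    (hI : Inv G ε v' v'' k) : Inv G ε v' v'' (k + 1) := by
  obtain ⟨a, b, P, Q, hP, hQ, hdisj, hlP, hlQ, hU1, hU2, hdA, hdB⟩ := hI
  rw [← dG_eq] at hdA hdB
  obtain ⟨key1, key2, key3⟩ := hc.numeric hnl
  have hd0 := hc.hd0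
  have hkl' : (2 * k + 3 : ℝ) ≤ (l : ℝ) := by exact_mod_cast hkl
  have hmono : ∀ m₁ m₂ : ℝ, m₁ ≤ m₂ → (dG G - ε) * m₁ ≤ (dG G - ε) * m₂ :=
    fun _ _ h => mul_le_mul_of_nonneg_left h hd0.le
  have hεn0 : (0:ℝ) < ε * n := by linarith
  have mA := hmono ((n:ℝ) - l) ((n:ℝ) - 2*k) (by linarith)
  have mB := hmono ((n:ℝ) - l) ((n:ℝ) - 2*k - 1) (by linarith)
  have mS := hmono ((n:ℝ) - l) ((n:ℝ) - (2*k+1) - 1) (by linarith)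
  obtain ⟨a', b', P', Q', hP', hQ', hdisj', hlP', hlQ', c1, c2, d1, d2⟩ :=
    hc.double_extend hP hQ hdisj hU1 hU2 hdA hdB
      (by linarith) (by linarith) (by linarith) (by linarith)
  refine ⟨a', b', P', Q', hP', hQ', hdisj', by omega, by omega, ?_, ?_, ?_, ?_⟩
  · rw [c1]; push_cast; ring
  · rw [c2]; push_cast; ring
  · rw [← dG_eq]
    have heq : (n:ℝ) - 2*((k:ℝ)+1) = ((n:ℝ) - (2*(k:ℝ)+1)) - 1 := by ring
    push_cast
    rw [heq]
    exact d1
  · rw [← dG_eq]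
    have heq : (n:ℝ) - 2*((k:ℝ)+1) - 1 = ((n:ℝ) - (2*(k:ℝ)+1)) - 2 := by ring
    push_cast
    rw [heq]
    exact d2

lemma inv_base {v' v'' : Fin n ⊕ Fin n} {l : ℕ} (hbig : 10 < ε * n)
    (hnl : 5 * ε * n / β ≤ (n : ℝ) - (l : ℝ)) (hl3 : 3 ≤ l)
    (hv' : v' ∈ VL n) (hv'' : v'' ∈ VR n)
    (hdeg' : β * n / 5 ≤ ((G.neighborSet v').ncard : ℝ))
    (hdeg'' : β * n / 5 ≤ ((G.neighborSet v'').ncard : ℝ)) :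
    Inv G ε v' v'' 1 := by
  obtain ⟨hb1, hb2, hb3, hb4⟩ := hc.base_facts hv' hv'' hdeg' hdeg''
  obtain ⟨key1, key2, key3⟩ := hc.numeric hnl
  have hd0 := hc.hd0
  have hl3' : (3:ℝ) ≤ (l : ℝ) := by exact_mod_cast hl3
  have hmono : ∀ m₁ m₂ : ℝ, m₁ ≤ m₂ → (dG G - ε) * m₁ ≤ (dG G - ε) * m₂ :=
    fun _ _ h => mul_le_mul_of_nonneg_left h hd0.le
  have hεn0 : (0:ℝ) < ε * n := by linarith
  have mS := hmono ((n:ℝ) - l) ((n:ℝ) - 1 - 1) (by linarith)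
  have hP0 : (Walk.nil : G.Walk v' v').IsPath := Walk.IsPath.nil
  have hQ0 : (Walk.nil : G.Walk v'' v'').IsPath := Walk.IsPath.nil
  have hdisj0 : ∀ z ∈ (Walk.nil : G.Walk v' v').support,
      z ∉ (Walk.nil : G.Walk v'' v'').support := by
    intro z hz hz'
    simp only [Walk.support_nil, List.mem_singleton] at hz hz'
    subst hz
    rw [hz'] at hv'
    exact disjoint_VL_VR hv' hv''
  obtain ⟨a', b', P', Q', hP', hQ', hdisj', hlP', hlQ', c1, c2, d1, d2⟩ :=
    hc.double_extend hP0 hQ0 hdisj0 hb1 hb2 hb3 hb4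
      (by linarith) (by linarith) (by linarith) (by linarith)
  refine ⟨a', b', P', Q', hP', hQ', hdisj', by simpa using hlP', by simpa using hlQ',
    ?_, ?_, ?_, ?_⟩
  · rw [c1]; push_cast; ring
  · rw [c2]; push_cast; ring
  · rw [← dG_eq]
    have heq : (n:ℝ) - 2*((1:ℕ):ℝ) = ((n:ℝ) - 1) - 1 := by push_cast; ring
    rw [heq]
    exact d1
  · rw [← dG_eq]
    have heq : (n:ℝ) - 2*((1:ℕ):ℝ) - 1 = ((n:ℝ) - 1) - 2 := by push_cast; ring
    rw [heq]
    exact d2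

lemma main_regime {v' v'' : Fin n ⊕ Fin n} {l : ℕ} (hbig : 10 < ε * n) (hl1 : 1 ≤ l)
    (hnl : 5 * ε * n / β ≤ (n : ℝ) - (l : ℝ))
    (hv' : v' ∈ VL n) (hv'' : v'' ∈ VR n)
    (hdeg' : β * n / 5 ≤ ((G.neighborSet v').ncard : ℝ))
    (hdeg'' : β * n / 5 ≤ ((G.neighborSet v'').ncard : ℝ)) :
    ∃ W : G.Walk v' v'', W.IsPath ∧ W.length = 2 * l + 1 := by
  obtain ⟨hb1, hb2, hb3, hb4⟩ := hc.base_facts hv' hv'' hdeg' hdeg''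
  obtain ⟨key1, key2, key3⟩ := hc.numeric hnl
  have hd0 := hc.hd0
  have hl1' : (1:ℝ) ≤ (l : ℝ) := by exact_mod_cast hl1
  have hmono : ∀ m₁ m₂ : ℝ, m₁ ≤ m₂ → (dG G - ε) * m₁ ≤ (dG G - ε) * m₂ :=
    fun _ _ h => mul_le_mul_of_nonneg_left h hd0.le
  have hεn0 : (0:ℝ) < ε * n := by linarith
  have hP0 : (Walk.nil : G.Walk v' v').IsPath := Walk.IsPath.nil
  have hQ0 : (Walk.nil : G.Walk v'' v'').IsPath := Walk.IsPath.nil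
  have hdisj0 : ∀ z ∈ (Walk.nil : G.Walk v' v').support,
      z ∉ (Walk.nil : G.Walk v'' v'').support := by
    intro z hz hz'
    simp only [Walk.support_nil, List.mem_singleton] at hz hz'
    subst hz
    rw [hz'] at hv'
    exact disjoint_VL_VR hv' hv''
  rcases eq_or_lt_of_le hl1 with h1 | h1
  · -- l = 1
    obtain ⟨W, hW, hlen⟩ := hc.connect_walk hP0 hQ0 hdisj0 (by linarith) (by linarith)
    exact ⟨W, hW, by simp at hlen; omega⟩
  rcases eq_or_lt_of_le (show 2 ≤ l by omega) with h2 | h2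
  · -- l = 2
    subst h2
    have mS := hmono ((n:ℝ) - 2) ((n:ℝ) - 1) (by linarith)
    obtain ⟨y, x, P', hP', hdisj', hlen', hyU, hxU, hL', hR', hdegx⟩ :=
      hc.extendP_walk hP0 hQ0 hdisj0 (by linarith)
        (by rw [hb1]; norm_num at hnl key2 ⊢; linarith)
        (by rw [hb2]; norm_num at key2 ⊢; linarith)
        (by rw [hb1]; norm_num at key1 ⊢; linarith)
    rw [hb2] at hdegx
    have hA' : ε * n < ((G.neighborSet x ∩ unusedR P' (Walk.nil : G.Walk v'' v'')).ncard : ℝ) := by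
      have := hmono ((n:ℝ) - 2) ((n:ℝ) - 1 - 1) (by linarith)
      norm_num at key1 ⊢
      nlinarith [hmono ((n:ℝ) - (2:ℕ)) ((n:ℝ) - 1 - 1) (by push_cast; linarith)]
    have hB' : ε * n < ((G.neighborSet v'' ∩ unusedL P' (Walk.nil : G.Walk v'' v'')).ncard : ℝ) := by
      have hd := deg_inter_diff (G.neighborSet v'')
        (unusedL (Walk.nil : G.Walk v' v') (Walk.nil : G.Walk v'' v'')) x
      rw [← hL'] at hd
      linarith
    obtain ⟨W, hW, hlen⟩ := hc.connect_walk hP' hQ0 hdisj' hA' hB'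
    refine ⟨W, hW, ?_⟩
    rw [hlen, hlen']
    simp
  · -- 3 ≤ l
    have hl3 : 3 ≤ l := h2
    have claim : ∀ k, 1 ≤ k → 2 * k + 1 ≤ l → Inv G ε v' v'' k := by
      intro k
      induction k with
      | zero => omega
      | succ k ih =>
        intro _ hk2
        rcases Nat.eq_zero_or_pos k with rfl | hkpos
        · exact hc.inv_base hbig hnl (by omega) hv' hv'' hdeg' hdeg''
        · exact hc.inv_step hbig hnl (by omega) (ih (by omega) (by omega))
    rcases Nat.even_or_odd l with ⟨m, hm⟩ | ⟨m, hm⟩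
    · -- l even, l = m + m, m ≥ 2
      have hm2 : 2 ≤ m := by omega
      obtain ⟨a, b, P, Q, hP, hQ, hdisj, hlP, hlQ, hU1, hU2, hdA, hdB⟩ :=
        claim (m - 1) (by omega) (by omega)
      rw [← dG_eq] at hdA hdB
      have hcast : ((m - 1 : ℕ) : ℝ) = (m : ℝ) - 1 := by
        have : 1 ≤ m := by omega
        push_cast [this]
        ring
      have hlr : (l : ℝ) = (m : ℝ) + (m : ℝ) := by exact_mod_cast hm
      rw [hcast] at hU1 hU2 hdA hdB
      -- |U| = n - (2m - 1) = n - l + 1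
      have hU1' : ((unusedL P Q).ncard : ℝ) = (n:ℝ) - l + 1 := by rw [hU1, hlr]; ring
      have hU2' : ((unusedR P Q).ncard : ℝ) = (n:ℝ) - l + 1 := by rw [hU2, hlr]; ring
      have hdA' : (dG G - ε) * ((n:ℝ) - l + 2) - 1
          ≤ ((G.neighborSet a ∩ unusedR P Q).ncard : ℝ) := by
        have : (n:ℝ) - 2*((m:ℝ)-1) = (n:ℝ) - l + 2 := by rw [hlr]; ring
        rwa [this] at hdA
      have hdB' : (dG G - ε) * ((n:ℝ) - l + 1)
          ≤ ((G.neighborSet b ∩ unusedL P Q).ncard : ℝ) := by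
        have : (n:ℝ) - 2*((m:ℝ)-1) - 1 = (n:ℝ) - l + 1 := by rw [hlr]; ring
        rwa [this] at hdB
      have m2 := hmono ((n:ℝ) - l) ((n:ℝ) - l + 2) (by linarith)
      have m1 := hmono ((n:ℝ) - l) ((n:ℝ) - l + 1) (by linarith)
      obtain ⟨y, x, P', hP', hdisj', hlen', hyU, hxU, hL', hR', hdegx⟩ :=
        hc.extendP_walk hP hQ hdisj (by linarith)
          (by rw [hU1']; linarith) (by rw [hU2']; linarith) (by rw [hU1']; linarith)
      rw [hU2'] at hdegx
      have hA' : ε * n < ((G.neighborSet x ∩ unusedR P' Q).ncard : ℝ) := by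
        have : (n:ℝ) - l + 1 - 1 = (n:ℝ) - l := by ring
        rw [this] at hdegx
        linarith
      have hB' : ε * n < ((G.neighborSet b ∩ unusedL P' Q).ncard : ℝ) := by
        have hd := deg_inter_diff (G.neighborSet b) (unusedL P Q) x
        rw [← hL'] at hd
        linarith
      obtain ⟨W, hW, hlen⟩ := hc.connect_walk hP' hQ hdisj' hA' hB'
      refine ⟨W, hW, ?_⟩
      rw [hlen, hlen', hlP, hlQ]
      omega
    · -- l odd, l = 2m + 1, m ≥ 1
      have hm1 : 1 ≤ m := by omega
      obtain ⟨a, b, P, Q, hP, hQ, hdisj, hlP, hlQ, hU1, hU2, hdA, hdB⟩ :=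
        claim m (by omega) (by omega)
      rw [← dG_eq] at hdA hdB
      have hlr : (l : ℝ) = 2 * (m : ℝ) + 1 := by exact_mod_cast hm
      have hdA' : (dG G - ε) * ((n:ℝ) - l + 1) - 1
          ≤ ((G.neighborSet a ∩ unusedR P Q).ncard : ℝ) := by
        have : (n:ℝ) - 2*(m:ℝ) = (n:ℝ) - l + 1 := by rw [hlr]; ring
        rwa [this] at hdA
      have hdB' : (dG G - ε) * ((n:ℝ) - l)
          ≤ ((G.neighborSet b ∩ unusedL P Q).ncard : ℝ) := by
        have : (n:ℝ) - 2*(m:ℝ) - 1 = (n:ℝ) - l := by rw [hlr]; ring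
        rwa [this] at hdB
      have m1 := hmono ((n:ℝ) - l) ((n:ℝ) - l + 1) (by linarith)
      obtain ⟨W, hW, hlen⟩ := hc.connect_walk hP hQ hdisj (by linarith) (by linarith)
      refine ⟨W, hW, ?_⟩
      rw [hlen, hlP, hlQ]
      omega

end RegCtx
end RPLP

namespace RPLP
set_option linter.unusedSectionVars false
set_option linter.unusedVariables false
set_option maxHeartbeats 2000000
open SimpleGraph

section Helpers2
variable {α : Type*} [Finite α]

lemma ncard_inter_insert_mem {N B : Set α} {w : α} (hw : w ∉ B) (hwN : w ∈ N) :
    (N ∩ insert w B).ncard = (N ∩ B).ncard + 1 := by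
  have h : N ∩ insert w B = insert w (N ∩ B) := by
    ext z
    simp only [Set.mem_inter_iff, Set.mem_insert_iff]
    constructor
    · rintro ⟨hz, rfl | hz'⟩
      · exact Or.inl rfl
      · exact Or.inr ⟨hz, hz'⟩
    · rintro (rfl | ⟨hz, hz'⟩)
      · exact ⟨hwN, Or.inl rfl⟩
      · exact ⟨hz, Or.inr hz'⟩
  rw [h, Set.ncard_insert_of_notMem (fun hmem => hw hmem.2) (Set.toFinite _)]

lemma ncard_inter_insert_not_mem {N B : Set α} {w : α} (hw : w ∉ B) (hwN : w ∉ N) :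
    (N ∩ insert w B).ncard = (N ∩ B).ncard := by
  have h : N ∩ insert w B = N ∩ B := by
    ext z
    simp only [Set.mem_inter_iff, Set.mem_insert_iff]
    constructor
    · rintro ⟨hz, rfl | hz'⟩
      · exact absurd hz hwN
      · exact ⟨hz, hz'⟩
    · rintro ⟨hz, hz'⟩
      exact ⟨hz, Or.inr hz'⟩
  rw [h]

lemma nat_eq_of_abs_cast_lt_one {a b : ℕ} (h : |(a : ℝ) - (b : ℝ)| < 1) : a = b := by
  rw [abs_lt] at h
  have h1 : (a : ℝ) < b + 1 := by linarith [h.2]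
  have h2 : (b : ℝ) < a + 1 := by linarith [h.1]
  have h1' : a < b + 1 := by exact_mod_cast h1
  have h2' : b < a + 1 := by exact_mod_cast h2
  omega

end Helpers2

variable {n : ℕ} {G : SimpleGraph (Fin n ⊕ Fin n)} {β ε : ℝ}

namespace RegCtx

variable (hc : RegCtx n G β ε)
include hc

lemma small_m_facts (hsmall : ε * n ≤ 10) :
    ε * n < ((⌊ε * n⌋₊ + 1 : ℕ) : ℝ) ∧ (⌊ε * n⌋₊ + 1 : ℕ) ≤ 11 ∧
      2 * ε * ((⌊ε * n⌋₊ + 1 : ℕ) : ℝ) ^ 2 < 1 ∧ (0:ℝ) ≤ ε * n := by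
  have hε := hc.hε0
  have hn := hc.hn
  have hn' : (1000000 : ℝ) < n := by exact_mod_cast hn
  have hεn0 : (0:ℝ) ≤ ε * n := mul_nonneg hε.le (Nat.cast_nonneg n)
  have hfl : ⌊ε * n⌋₊ ≤ 10 := by
    have := Nat.floor_le_floor (R := ℝ) hsmall
    simpa using this
  have hm11 : (⌊ε * n⌋₊ + 1 : ℕ) ≤ 11 := by omega
  have hlt : ε * n < ((⌊ε * n⌋₊ + 1 : ℕ) : ℝ) := by
    push_cast
    exact Nat.lt_floor_add_one _
  have hεsmall : ε * 1000000 ≤ 10 := by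
    nlinarith
  have hm11' : ((⌊ε * n⌋₊ + 1 : ℕ) : ℝ) ≤ 11 := by exact_mod_cast hm11
  refine ⟨hlt, hm11, ?_, hεn0⟩
  have hm0 : (0:ℝ) ≤ ((⌊ε * n⌋₊ + 1 : ℕ) : ℝ) := Nat.cast_nonneg _
  nlinarith

lemma deg_eq_rows (hsmall : ε * n ≤ 10) {p p' : Fin n} {B' : Set (Fin n ⊕ Fin n)}
    (hB : B' ⊆ VR n) (hBm : B'.ncard = ⌊ε * n⌋₊ + 1) :
    (G.neighborSet (Sum.inl p) ∩ B').ncard = (G.neighborSet (Sum.inl p') ∩ B').ncard := by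
  classical
  by_cases hpp : p = p'
  · rw [hpp]
  obtain ⟨hεm, hm11, h2em, hεn0⟩ := hc.small_m_facts hsmall
  set m : ℕ := ⌊ε * n⌋₊ + 1 with hm
  have hn := hc.hn
  -- choose T
  have hpair : ({Sum.inl p, Sum.inl p'} : Set (Fin n ⊕ Fin n)) ⊆ VL n :=
    by rintro z (rfl | rfl) <;> exact ⟨_, rfl⟩
  have hpaircard : ({Sum.inl p, Sum.inl p'} : Set (Fin n ⊕ Fin n)).ncard = 2 := by
    rw [Set.ncard_pair (by simpa using hpp)]
  have hdiffcard : (VL n \ {Sum.inl p, Sum.inl p'}).ncard = n - 2 := by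
    rw [Set.ncard_diff hpair (Set.toFinite _), hpaircard, ncard_VL]
  have hT : ∃ T ⊆ VL n \ {Sum.inl p, Sum.inl p'}, T.ncard = m - 1 :=
    Set.exists_subset_card_eq (by omega)
  obtain ⟨T, hTsub, hTcard⟩ := hT
  have hTVL : T ⊆ VL n := hTsub.trans Set.diff_subset
  have hpT : Sum.inl p ∉ T := fun h => (hTsub h).2 (Or.inl rfl)
  have hp'T : Sum.inl p' ∉ T := fun h => (hTsub h).2 (Or.inr rfl)
  set A₁ : Set (Fin n ⊕ Fin n) := insert (Sum.inl p) T with hA₁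
  set A₂ : Set (Fin n ⊕ Fin n) := insert (Sum.inl p') T with hA₂
  have hA₁card : A₁.ncard = m := by
    rw [hA₁, Set.ncard_insert_of_notMem hpT (Set.toFinite _), hTcard]
    omega
  have hA₂card : A₂.ncard = m := by
    rw [hA₂, Set.ncard_insert_of_notMem hp'T (Set.toFinite _), hTcard]
    omega
  have hA₁sub : A₁ ⊆ VL n := by
    rw [hA₁]
    exact Set.insert_subset ⟨_, rfl⟩ hTVL
  have hA₂sub : A₂ ⊆ VL n := by
    rw [hA₂]
    exact Set.insert_subset ⟨_, rfl⟩ hTVL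
  have hreg₁ := hc.hreg A₁ hA₁sub B' hB
    (by rw [ncard_VL, hA₁card]; exact hεm) (by rw [ncard_VR, hBm]; exact_mod_cast hεm)
  have hreg₂ := hc.hreg A₂ hA₂sub B' hB
    (by rw [ncard_VL, hA₂card]; exact hεm) (by rw [ncard_VR, hBm]; exact_mod_cast hεm)
  set e₁ := edgesBetween G A₁ B' with he₁
  set e₂ := edgesBetween G A₂ B' with he₂
  have hm0 : (0:ℝ) < (m:ℝ) := by
    have h1m : 1 ≤ m := by omega
    exact_mod_cast Nat.lt_of_lt_of_le Nat.zero_lt_one h1m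
  have hden₁ : (e₁ : ℝ) = edgeDen G A₁ B' * ((m:ℝ) * m) := by
    simp only [edgeDen, he₁, hA₁card, hBm]
    push_cast
    field_simp
  have hden₂ : (e₂ : ℝ) = edgeDen G A₂ B' * ((m:ℝ) * m) := by
    simp only [edgeDen, he₂, hA₂card, hBm]
    push_cast
    field_simp
  have habs : |(e₁ : ℝ) - (e₂ : ℝ)| < 1 := by
    have h₁ := abs_le.1 hreg₁
    have h₂ := abs_le.1 hreg₂
    have hsq : (0:ℝ) ≤ (m:ℝ) * m := by positivity
    have t1 := mul_le_mul_of_nonneg_right h₁.1 hsq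
    have t2 := mul_le_mul_of_nonneg_right h₁.2 hsq
    have t3 := mul_le_mul_of_nonneg_right h₂.1 hsq
    have t4 := mul_le_mul_of_nonneg_right h₂.2 hsq
    have h2em' : 2 * ε * ((m:ℝ) * m) < 1 := by nlinarith
    rw [abs_lt]
    constructor
    · rw [hden₁, hden₂]; nlinarith [t1, t2, t3, t4]
    · rw [hden₁, hden₂]; nlinarith [t1, t2, t3, t4]
  have hdecomp₁ : e₁ = edgesBetween G T B' + (G.neighborSet (Sum.inl p) ∩ B').ncard :=
    edgesBetween_insert_left G T B' hpT
  have hdecomp₂ : e₂ = edgesBetween G T B' + (G.neighborSet (Sum.inl p') ∩ B').ncard :=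
    edgesBetween_insert_left G T B' hp'T
  have he : e₁ = e₂ := nat_eq_of_abs_cast_lt_one habs
  omega

lemma rows_transfer (hsmall : ε * n ≤ 10) (p p' q : Fin n)
    (hadj : G.Adj (Sum.inl p) (Sum.inr q)) : G.Adj (Sum.inl p') (Sum.inr q) := by
  classical
  by_cases hpp : p = p'
  · rwa [hpp] at hadj
  by_contra hn'
  obtain ⟨hεm, hm11, h2em, hεn0⟩ := hc.small_m_facts hsmall
  set m : ℕ := ⌊ε * n⌋₊ + 1 with hm
  have hn := hc.hn
  -- Step 1 : every other column q₂ has  Adj p ∧ ¬ Adj p'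
  have step1 : ∀ q₂ : Fin n, q₂ ≠ q →
      G.Adj (Sum.inl p) (Sum.inr q₂) ∧ ¬ G.Adj (Sum.inl p') (Sum.inr q₂) := by
    intro q₂ hq₂
    have hpairsub : ({Sum.inr q, Sum.inr q₂} : Set (Fin n ⊕ Fin n)) ⊆ VR n := by
      rintro z (rfl | rfl) <;> exact ⟨_, rfl⟩
    have hpaircard : ({Sum.inr q, Sum.inr q₂} : Set (Fin n ⊕ Fin n)).ncard = 2 :=
      Set.ncard_pair (by simpa using (Ne.symm hq₂))
    have hdiffcard : (VR n \ {Sum.inr q, Sum.inr q₂}).ncard = n - 2 := by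
      rw [Set.ncard_diff hpairsub (Set.toFinite _), hpaircard, ncard_VR]
    obtain ⟨B₀, hB₀sub, hB₀card⟩ :
        ∃ B₀ ⊆ VR n \ {Sum.inr q, Sum.inr q₂}, B₀.ncard = m - 1 :=
      Set.exists_subset_card_eq (by omega)
    have hB₀VR : B₀ ⊆ VR n := hB₀sub.trans Set.diff_subset
    have hqB₀ : Sum.inr q ∉ B₀ := fun h => (hB₀sub h).2 (Or.inl rfl)
    have hq₂B₀ : Sum.inr q₂ ∉ B₀ := fun h => (hB₀sub h).2 (Or.inr rfl)
    have hB₁ : (insert (Sum.inr q) B₀).ncard = m := by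
      rw [Set.ncard_insert_of_notMem hqB₀ (Set.toFinite _), hB₀card]; omega
    have hB₂ : (insert (Sum.inr q₂) B₀).ncard = m := by
      rw [Set.ncard_insert_of_notMem hq₂B₀ (Set.toFinite _), hB₀card]; omega
    have hE₁ := hc.deg_eq_rows hsmall (p := p) (p' := p')
      (Set.insert_subset ⟨_, rfl⟩ hB₀VR) hB₁
    have hE₂ := hc.deg_eq_rows hsmall (p := p) (p' := p')
      (Set.insert_subset ⟨_, rfl⟩ hB₀VR) hB₂
    have hadj' : Sum.inr q ∈ G.neighborSet (Sum.inl p) := hadj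
    have hnadj' : Sum.inr q ∉ G.neighborSet (Sum.inl p') := hn'
    rw [ncard_inter_insert_mem hqB₀ hadj', ncard_inter_insert_not_mem hqB₀ hnadj'] at hE₁
    by_cases h1 : Sum.inr q₂ ∈ G.neighborSet (Sum.inl p) <;>
      by_cases h2 : Sum.inr q₂ ∈ G.neighborSet (Sum.inl p')
    · rw [ncard_inter_insert_mem hq₂B₀ h1, ncard_inter_insert_mem hq₂B₀ h2] at hE₂
      omega
    · exact ⟨h1, h2⟩
    · rw [ncard_inter_insert_not_mem hq₂B₀ h1, ncard_inter_insert_mem hq₂B₀ h2] at hE₂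
      omega
    · rw [ncard_inter_insert_not_mem hq₂B₀ h1, ncard_inter_insert_not_mem hq₂B₀ h2] at hE₂
      omega
  -- Step 2 : contradiction using an m-set avoiding q
  have hdiffcard : (VR n \ {Sum.inr q}).ncard = n - 1 := by
    rw [Set.ncard_diff (by rintro z rfl; exact ⟨_, rfl⟩) (Set.toFinite _),
      Set.ncard_singleton, ncard_VR]
  obtain ⟨B', hB'sub, hB'card⟩ : ∃ B' ⊆ VR n \ {Sum.inr q}, B'.ncard = m :=
    Set.exists_subset_card_eq (by omega)
  have hB'VR : B' ⊆ VR n := hB'sub.trans Set.diff_subset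
  have hfull : G.neighborSet (Sum.inl p) ∩ B' = B' := by
    apply Set.inter_eq_right.mpr
    intro z hz
    obtain ⟨w, rfl⟩ := hB'VR hz
    have hwq : w ≠ q := fun h => (hB'sub hz).2 (by rw [h]; exact Set.mem_singleton _)
    exact (step1 w hwq).1
  have hempty : G.neighborSet (Sum.inl p') ∩ B' = ∅ := by
    ext z
    simp only [Set.mem_inter_iff, Set.mem_empty_iff_false, iff_false, not_and]
    intro hzN hzB
    obtain ⟨w, rfl⟩ := hB'VR hzB
    have hwq : w ≠ q := fun h => (hB'sub hzB).2 (by rw [h]; exact Set.mem_singleton _)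
    exact (step1 w hwq).2 hzN
  have := hc.deg_eq_rows hsmall (p := p) (p' := p') hB'VR hB'card
  rw [hfull, hempty, hB'card, Set.ncard_empty] at this
  omega

end RegCtx
end RPLP

namespace RPLP
set_option linter.unusedSectionVars false
set_option linter.unusedVariables false
set_option maxHeartbeats 2000000
open SimpleGraph

variable {n : ℕ} {G : SimpleGraph (Fin n ⊕ Fin n)} {β ε : ℝ}

namespace RegCtx

variable (hc : RegCtx n G β ε)
include hc

lemma all_adj (hsmall : ε * n ≤ 10) (p : Fin n) (q : Fin n) :
    G.Adj (Sum.inl p) (Sum.inr q) := by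
  classical
  have hn := hc.hn
  have hn0 : 0 < n := by omega
  set p₀ : Fin n := ⟨0, hn0⟩ with hp₀
  suffices h : ∀ q' : Fin n, G.Adj (Sum.inl p₀) (Sum.inr q') by
    exact hc.rows_transfer hsmall p₀ p q (h q)
  intro q'
  by_contra hnq
  obtain ⟨hεm, hm11, h2em, hεn0⟩ := hc.small_m_facts hsmall
  set m : ℕ := ⌊ε * n⌋₊ + 1 with hm
  have hm1 : 1 ≤ m := by omega
  have hm0 : (0:ℝ) < (m:ℝ) := by exact_mod_cast hm1
  have hrows : ∀ a w : Fin n, G.Adj (Sum.inl a) (Sum.inr w) ↔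
      G.Adj (Sum.inl p₀) (Sum.inr w) :=
    fun a w => ⟨fun h => hc.rows_transfer hsmall a p₀ w h,
      fun h => hc.rows_transfer hsmall p₀ a w h⟩
  set SV : Set (Fin n ⊕ Fin n) := G.neighborSet (Sum.inl p₀) with hSV
  have hSVsub : SV ⊆ VR n := hc.nbhd_sub_VR ⟨p₀, rfl⟩
  obtain ⟨A', hA'sub, hA'card⟩ : ∃ A' ⊆ VL n, A'.ncard = m :=
    Set.exists_subset_card_eq (by rw [ncard_VL]; omega)
  have hA'reg : ε * ((VL n).ncard : ℝ) < (A'.ncard : ℝ) := by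
    rw [ncard_VL, hA'card]; exact hεm
  have hm'ne : ((m:ℝ) * m) ≠ 0 := by positivity
  by_cases hbigS : m ≤ SV.ncard
  · -- dense case : density close to 1 but also ≤ 1 - 1/m
    obtain ⟨B₁, hB₁sub, hB₁card⟩ : ∃ B₁ ⊆ SV, B₁.ncard = m :=
      Set.exists_subset_card_eq hbigS
    have hB₁VR : B₁ ⊆ VR n := hB₁sub.trans hSVsub
    have hB₁N : ∀ a ∈ A', (G.neighborSet a ∩ B₁).ncard = m := by
      intro a ha
      obtain ⟨a', rfl⟩ := hA'sub ha
      have : G.neighborSet (Sum.inl a') ∩ B₁ = B₁ := by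
        apply Set.inter_eq_right.mpr
        intro z hz
        obtain ⟨w, rfl⟩ := hB₁VR hz
        exact (hrows a' w).mpr (hB₁sub hz)
      rw [this, hB₁card]
    have he₁ : edgesBetween G A' B₁ = m * m := by
      rw [edgesBetween_const_left G A' hB₁N, hA'card]
    have hden₁ : edgeDen G A' B₁ = 1 := by
      simp only [edgeDen]
      rw [he₁, hA'card, hB₁card]
      push_cast
      field_simp
    have hreg₁ := hc.hreg A' hA'sub B₁ hB₁VR hA'reg
      (by rw [ncard_VR, hB₁card]; exact hεm)
    rw [hden₁] at hreg₁
    -- second box containing the non-neighbour q'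
    obtain ⟨B₂₀, hB₂₀sub, hB₂₀card⟩ : ∃ B ⊆ SV, B.ncard = m - 1 :=
      Set.exists_subset_card_eq (by omega)
    have hB₂₀VR : B₂₀ ⊆ VR n := hB₂₀sub.trans hSVsub
    have hqB₂₀ : Sum.inr q' ∉ B₂₀ := fun h => hnq (hB₂₀sub h)
    set B₂ : Set (Fin n ⊕ Fin n) := insert (Sum.inr q') B₂₀ with hB₂
    have hB₂card : B₂.ncard = m := by
      rw [hB₂, Set.ncard_insert_of_notMem hqB₂₀ (Set.toFinite _), hB₂₀card]
      omega
    have hB₂VR : B₂ ⊆ VR n := Set.insert_subset ⟨_, rfl⟩ hB₂₀VR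
    have hB₂N : ∀ a ∈ A', (G.neighborSet a ∩ B₂).ncard = m - 1 := by
      intro a ha
      obtain ⟨a', rfl⟩ := hA'sub ha
      have hqN : Sum.inr q' ∉ G.neighborSet (Sum.inl a') :=
        fun h => hnq ((hrows a' q').mp h)
      rw [hB₂, ncard_inter_insert_not_mem hqB₂₀ hqN]
      have : G.neighborSet (Sum.inl a') ∩ B₂₀ = B₂₀ := by
        apply Set.inter_eq_right.mpr
        intro z hz
        obtain ⟨w, rfl⟩ := hB₂₀VR hz
        exact (hrows a' w).mpr (hB₂₀sub hz)
      rw [this, hB₂₀card]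
    have he₂ : edgesBetween G A' B₂ = m * (m - 1) := by
      rw [edgesBetween_const_left G A' hB₂N, hA'card]
    have hreg₂ := hc.hreg A' hA'sub B₂ hB₂VR hA'reg
      (by rw [ncard_VR, hB₂card]; exact hεm)
    have hden₂ : edgeDen G A' B₂ = 1 - 1/(m:ℝ) := by
      simp only [edgeDen]
      rw [he₂, hA'card, hB₂card]
      have : ((m * (m-1) : ℕ) : ℝ) = (m:ℝ) * ((m:ℝ) - 1) := by
        push_cast [hm1]
        ring
      rw [this]
      field_simp
    rw [hden₂] at hreg₂
    have h1 := (abs_le.1 hreg₁).1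
    have h2 := (abs_le.1 hreg₂).2
    -- 1 - ε ≤ d and d ≤ 1 - 1/m + ε  ⇒  1/m ≤ 2ε  ⇒  1 ≤ 2εm < 1
    have hinv : 1/(m:ℝ) ≤ 2*ε := by linarith
    have hle : 1 ≤ 2*ε*(m:ℝ) := by
      rw [div_le_iff₀ hm0] at hinv
      linarith
    have hε0 := hc.hε0
    have hmge1 : (1:ℝ) ≤ (m:ℝ) := by exact_mod_cast hm1
    have hstep : 2*ε*(m:ℝ) ≤ 2*ε*(m:ℝ)*(m:ℝ) := by nlinarith
    nlinarith
  · -- sparse case : an empty box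
    push_neg at hbigS
    have hSVcard : (VR n \ SV).ncard = n - SV.ncard := by
      rw [Set.ncard_diff hSVsub (Set.toFinite _), ncard_VR]
    obtain ⟨B₃, hB₃sub, hB₃card⟩ : ∃ B₃ ⊆ VR n \ SV, B₃.ncard = m :=
      Set.exists_subset_card_eq (by omega)
    have hB₃VR : B₃ ⊆ VR n := hB₃sub.trans Set.diff_subset
    have hB₃N : ∀ a ∈ A', (G.neighborSet a ∩ B₃).ncard = 0 := by
      intro a ha
      obtain ⟨a', rfl⟩ := hA'sub ha
      have : G.neighborSet (Sum.inl a') ∩ B₃ = ∅ := by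
        ext z
        simp only [Set.mem_inter_iff, Set.mem_empty_iff_false, iff_false, not_and]
        intro hzN hzB
        obtain ⟨w, rfl⟩ := hB₃VR hzB
        exact (hB₃sub hzB).2 ((hrows a' w).mp hzN)
      rw [this, Set.ncard_empty]
    have he₃ : edgesBetween G A' B₃ = 0 := by
      rw [edgesBetween_const_left G A' hB₃N, hA'card, Nat.mul_zero]
    have hden₃ : edgeDen G A' B₃ = 0 := by
      simp only [edgeDen]
      rw [he₃]
      simp
    have hreg₃ := hc.hreg A' hA'sub B₃ hB₃VR hA'reg
      (by rw [ncard_VR, hB₃card]; exact hεm)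
    rw [hden₃] at hreg₃
    have h1 := (abs_le.1 hreg₃).2
    have hden := hc.hden
    have hβ0 := hc.hβ0
    have hεβ := hc.hεβ
    rw [dG] at hden
    simp only [sub_zero] at h1
    linarith

end RegCtx
end RPLP

namespace RPLP
set_option linter.unusedSectionVars false
set_option linter.unusedVariables false
set_option maxHeartbeats 2000000
open SimpleGraph

variable {n : ℕ} {G : SimpleGraph (Fin n ⊕ Fin n)} {β ε : ℝ}

namespace RegCtx

variable (hc : RegCtx n G β ε)
include hc

lemma complete_path (hcomp : ∀ p q, G.Adj (Sum.inl p) (Sum.inr q))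
    {v' v'' : Fin n ⊕ Fin n} (hv' : v' ∈ VL n) (hv'' : v'' ∈ VR n) :
    ∀ l : ℕ, l + 1 ≤ n → ∃ W : G.Walk v' v'', W.IsPath ∧ W.length = 2 * l + 1 ∧
      (W.support.filter (fun z => z.isLeft)).length ≤ l + 1 ∧
      (W.support.filter (fun z => z.isRight)).length ≤ l + 1 := by
  obtain ⟨p₀, rfl⟩ := hv'
  obtain ⟨q₀, rfl⟩ := hv''
  intro l
  induction l with
  | zero =>
    intro _
    refine ⟨Walk.cons (hcomp p₀ q₀) Walk.nil, ?_, rfl, ?_, ?_⟩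
    · rw [Walk.cons_isPath_iff]
      exact ⟨Walk.IsPath.nil, by simp⟩
    · simp [List.filter_cons]
    · simp [List.filter_cons]
  | succ l ih =>
    intro hln
    obtain ⟨W, hWp, hWlen, hWleft, hWright⟩ := ih (by omega)
    have hpL : ∃ pL : Fin n, Sum.inl pL ∉ W.support := by
      by_contra h'
      push_neg at h'
      have hsub : (Finset.univ.image (Sum.inl : Fin n → Fin n ⊕ Fin n))
          ⊆ (W.support.filter (fun z => z.isLeft)).toFinset := by
        intro z hz
        simp only [Finset.mem_image] at hz
        obtain ⟨p, _, rfl⟩ := hz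
        rw [List.mem_toFinset, List.mem_filter]
        exact ⟨h' p, rfl⟩
      have hcard := Finset.card_le_card hsub
      rw [Finset.card_image_of_injective _ Sum.inl_injective, Finset.card_univ,
        Fintype.card_fin] at hcard
      have := List.toFinset_card_le (W.support.filter (fun z => z.isLeft))
      omega
    have hqR : ∃ qR : Fin n, Sum.inr qR ∉ W.support := by
      by_contra h'
      push_neg at h'
      have hsub : (Finset.univ.image (Sum.inr : Fin n → Fin n ⊕ Fin n))
          ⊆ (W.support.filter (fun z => z.isRight)).toFinset := by
        intro z hz
        simp only [Finset.mem_image] at hz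
        obtain ⟨p, _, rfl⟩ := hz
        rw [List.mem_toFinset, List.mem_filter]
        exact ⟨h' p, rfl⟩
      have hcard := Finset.card_le_card hsub
      rw [Finset.card_image_of_injective _ Sum.inr_injective, Finset.card_univ,
        Fintype.card_fin] at hcard
      have := List.toFinset_card_le (W.support.filter (fun z => z.isRight))
      omega
    obtain ⟨pL, hpLW⟩ := hpL
    obtain ⟨qR, hqRW⟩ := hqR
    cases W with
    | @cons _ w _ hadj W' =>
      have hwVR : w ∈ VR n := hc.adj_left hadj
      obtain ⟨w', rfl⟩ := hwVR
      rw [Walk.cons_isPath_iff] at hWp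
      obtain ⟨hW'p, hv'nin⟩ := hWp
      simp only [Walk.support_cons, List.mem_cons, not_or] at hpLW hqRW
      refine ⟨Walk.cons (hcomp p₀ qR) (Walk.cons ((hcomp pL qR).symm)
        (Walk.cons (hcomp pL w') W')), ?_, ?_, ?_, ?_⟩
      · rw [Walk.cons_isPath_iff, Walk.cons_isPath_iff, Walk.cons_isPath_iff]
        refine ⟨⟨⟨hW'p, hpLW.2⟩, ?_⟩, ?_⟩
        · simp only [Walk.support_cons, List.mem_cons, not_or]
          exact ⟨by simp, hqRW.2⟩
        · simp only [Walk.support_cons, List.mem_cons, not_or]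
          refine ⟨by simp, ?_, hv'nin⟩
          intro h
          exact hpLW.1 h.symm
      · simp only [Walk.length_cons] at hWlen ⊢
        omega
      · simp only [Walk.support_cons, List.filter_cons] at hWleft ⊢
        simp only [Sum.isLeft_inl, Sum.isLeft_inr, if_true, if_false,
          List.length_cons] at hWleft ⊢
        simp at hWleft ⊢
        omega
      · simp only [Walk.support_cons, List.filter_cons] at hWright ⊢
        simp only [Sum.isRight_inl, Sum.isRight_inr, if_true, if_false,
          List.length_cons] at hWright ⊢
        simp at hWright ⊢
        omega

end RegCtx
end RPLP

set_option maxHeartbeats 2000000 in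
/-- For every `0 < β ≤ 1` there is `n₀` such that for every `n > n₀`: if `G` is
bipartite with parts `V₁`, `V₂` of size `n`, the pair `(V₁, V₂)` is `ε`-regular with
density at least `β/4` for some `0 < ε < β/100`, then for every `1 ≤ l ≤ n − 5εn/β`
and vertices `v' ∈ V₁`, `v'' ∈ V₂` of degree at least `βn/5` there is a path of
length `2l + 1` in `G` connecting `v'` and `v''`. -/
theorem regular_pair_long_paths (β : ℝ) (hβ0 : 0 < β) (hβ1 : β ≤ 1) :
    ∃ n₀ : ℕ, ∀ n : ℕ, n₀ < n →
      ∀ G : SimpleGraph (Fin n ⊕ Fin n), G ≤ completeBipartiteGraph (Fin n) (Fin n) →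
      ∀ ε : ℝ, 0 < ε → ε < β / 100 →
      IsEpsRegularPair G (Set.range Sum.inl) (Set.range Sum.inr) ε →
      β / 4 ≤ edgeDen G (Set.range Sum.inl) (Set.range Sum.inr) →
      ∀ l : ℕ, 1 ≤ l → (l : ℝ) ≤ (n : ℝ) - 5 * ε * (n : ℝ) / β →
      ∀ v' v'' : Fin n ⊕ Fin n, v' ∈ Set.range Sum.inl → v'' ∈ Set.range Sum.inr →
      β * (n : ℝ) / 5 ≤ ((G.neighborSet v').ncard : ℝ) →
      β * (n : ℝ) / 5 ≤ ((G.neighborSet v'').ncard : ℝ) →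
      ∃ p : G.Walk v' v'', p.IsPath ∧ p.length = 2 * l + 1 := by
  refine ⟨1000000, ?_⟩
  intro n hn G hbip ε hε0 hεβ hreg hden l hl1 hl2 v' v'' hv' hv'' hdeg' hdeg''
  have hc : RPLP.RegCtx n G β ε :=
    ⟨hbip, hβ0, hβ1, hε0, hεβ, hreg, by rw [RPLP.dG_eq]; exact hden, hn⟩
  have hn0 : (0:ℝ) < (n:ℝ) := by
    have : 0 < n := by omega
    exact_mod_cast this
  have hnl : 5 * ε * n / β ≤ (n : ℝ) - (l : ℝ) := by linarith
  have h5pos : (0:ℝ) < 5 * ε * n / β :=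
    div_pos (by nlinarith) hβ0
  have hlln : l < n := by
    have hlt : (l:ℝ) < (n:ℝ) := by linarith
    exact_mod_cast hlt
  by_cases hbig : 10 < ε * n
  · obtain ⟨W, h1, h2⟩ := hc.main_regime hbig hl1 hnl hv' hv'' hdeg' hdeg''
    exact ⟨W, h1, h2⟩
  · push_neg at hbig
    have hcomp := hc.all_adj hbig
    obtain ⟨W, h1, h2, -, -⟩ := hc.complete_path hcomp hv' hv'' l (by omega)
    exact ⟨W, h1, h2⟩
end
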